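/- arXiv:2208.12282 — 4 statements merged into one kernel-verified Lean document; each statement's English description precedes it below -/
import Mathlib

section
/- Let h ∈ H_{I,n} with I∪{n} = {i_1 < ⋯ < i_{r+1} = n} and i_0 = 0. Suppose that for some 1 ≤ k ≤ r one has h(i_k) = h(i_{k+1}) (where h(n) = n) and no element of I∪{n} is mapped to i_k by h. Let I' = I∖{i_k} and h' = h|_{I'∪{n}} ∈ H_{I',n}. Then for every N ≥ 1, [i_k−i_{k−1}]_q! · [i_{k+1}−i_k]_q! · csf_q^N(h) = [i_{k+1}−i_{k−1}]_q! · csf_q^N(h'). (This is the identity of Theorem 26, eq. (30a), of the paper, expressed via chromatic quasisymmetric functions using the paper's generalized Shareshian–Wachs theorem.) -/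
namespace GenHess

open scoped Classical

noncomputable section

/-- The vertex set `I ∪ {n}` of the weighted graph of a generalized Hessenberg function. -/
def verts (n : ℕ) (I : Finset ℕ) : Finset ℕ := insert n I

/-- `h : I ∪ {n} → I ∪ {n}` is a generalized Hessenberg function for `(I, n)`,
with `I ⊆ {1, …, n-1}`, `h i ≥ i`, and `h` weakly increasing on `I ∪ {n}`. -/
def IsGenHess (n : ℕ) (I : Finset ℕ) (h : ℕ → ℕ) : Prop :=
  (∀ i ∈ I, 1 ≤ i ∧ i ≤ n - 1) ∧
  (∀ i ∈ verts n I, h i ∈ verts n I) ∧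
  (∀ i ∈ verts n I, i ≤ h i) ∧
  (∀ i ∈ verts n I, ∀ j ∈ verts n I, i ≤ j → h i ≤ h j)

/-- The weight `w_h(i_k) = i_k - i_{k-1}` of a vertex: `v` minus the largest vertex
below `v` (or `0` if there is none). -/
def wt (n : ℕ) (I : Finset ℕ) (v : ℕ) : ℕ :=
  v - ((verts n I).filter (fun u => u < v)).sup id

/-- A proper coloring of the weighted graph `(Γ_h, w_h)` with colors in `[N]`:
each vertex `v` gets a set of colors of size `w_h(v)`, and adjacent vertices get
disjoint color sets (there is an edge `{i,j}` whenever `i < j ≤ h i`). -/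
def IsProper {N : ℕ} (n : ℕ) (I : Finset ℕ) (h : ℕ → ℕ)
    (γ : {x // x ∈ verts n I} → Finset (Fin N)) : Prop :=
  (∀ v : {x // x ∈ verts n I}, (γ v).card = wt n I v.val) ∧
  ∀ v u : {x // x ∈ verts n I}, v.val < u.val → u.val ≤ h v.val → Disjoint (γ v) (γ u)

/-- The ascent statistic `asc_h(γ) = Σ_{edges i<j} #{(a,b) ∈ γ(i)×γ(j) : a < b}`. -/
def asc {N : ℕ} (n : ℕ) (I : Finset ℕ) (h : ℕ → ℕ)
    (γ : {x // x ∈ verts n I} → Finset (Fin N)) : ℕ :=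
  ∑ v : {x // x ∈ verts n I}, ∑ u : {x // x ∈ verts n I},
    if v.val < u.val ∧ u.val ≤ h v.val then
      ((γ v ×ˢ γ u).filter fun ab => ab.1 < ab.2).card
    else 0

/-- The truncated chromatic quasisymmetric function `csf_q^N(h)`, as an element of
`ℤ[x_1,…,x_N][q]` (the outer `Polynomial.X` is `q`). -/
def csf (n : ℕ) (I : Finset ℕ) (h : ℕ → ℕ) (N : ℕ) :
    Polynomial (MvPolynomial (Fin N) ℤ) :=
  ∑ γ ∈ Finset.univ.filter
      (fun γ : {x // x ∈ verts n I} → Finset (Fin N) => IsProper n I h γ),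
    Polynomial.C (∏ v : {x // x ∈ verts n I}, ∏ a ∈ γ v, MvPolynomial.X a) *
      Polynomial.X ^ asc n I h γ

/-- The `q`-integer `[m]_q = 1 + q + ⋯ + q^{m-1}`. -/
def qNum (R : Type) [CommRing R] (m : ℕ) : Polynomial R :=
  ∑ i ∈ Finset.range m, Polynomial.X ^ i

/-- The `q`-factorial `[m]_q!`. -/
def qFact (R : Type) [CommRing R] : ℕ → Polynomial R
  | 0 => 1
  | m + 1 => qNum R (m + 1) * qFact R m

/-- The elementary symmetric polynomial `e_m(x_1,…,x_N)`, viewed as a constant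
polynomial in `q`. -/
def esym (N m : ℕ) : Polynomial (MvPolynomial (Fin N) ℤ) :=
  Polynomial.C (MvPolynomial.esymm (Fin N) ℤ m)

end

end GenHess


namespace GenHessAux

open Finset Polynomial

variable {α : Type*} [LinearOrder α] [DecidableEq α]

/-- count of ascending pairs -/
def cnt (A B : Finset α) : ℕ := ((A ×ˢ B).filter fun p => p.1 < p.2).card

lemma cnt_union_left {A B C : Finset α} (h : Disjoint A B) :
    cnt (A ∪ B) C = cnt A C + cnt B C := by
  unfold cnt
  rw [Finset.union_product, Finset.filter_union, Finset.card_union_of_disjoint]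
  exact Finset.disjoint_filter_filter (Finset.disjoint_product.mpr (Or.inl h))

lemma cnt_union_right {A B C : Finset α} (h : Disjoint A B) :
    cnt C (A ∪ B) = cnt C A + cnt C B := by
  unfold cnt
  rw [Finset.product_union, Finset.filter_union, Finset.card_union_of_disjoint]
  exact Finset.disjoint_filter_filter (Finset.disjoint_product.mpr (Or.inr h))

lemma cnt_empty_left (C : Finset α) : cnt (∅ : Finset α) C = 0 := by
  simp [cnt]

lemma cnt_empty_right (C : Finset α) : cnt C (∅ : Finset α) = 0 := by
  simp [cnt]

end GenHessAux

namespace GenHessAux2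
open GenHessAux Finset Polynomial

open GenHess (qNum qFact)

variable {α : Type*} [LinearOrder α] [DecidableEq α]

lemma qFact_zero (R : Type) [CommRing R] : qFact R 0 = 1 := by rw [qFact]

lemma qFact_succ (R : Type) [CommRing R] (m : ℕ) :
    qFact R (m + 1) = qNum R (m + 1) * qFact R m := by rw [qFact]

lemma qNum_add (R : Type) [CommRing R] (a b : ℕ) :
    qNum R (a + b) = qNum R a + X ^ a * qNum R b := by
  unfold qNum
  rw [Finset.sum_range_add, Finset.mul_sum]
  simp [pow_add]

lemma cnt_singleton_right {S : Finset α} {t : α} (h : ∀ x ∈ S, x < t) :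
    cnt S {t} = S.card := by
  unfold cnt
  rw [Finset.filter_true_of_mem, Finset.card_product, Finset.card_singleton, mul_one]
  rintro ⟨x, y⟩ hxy
  rw [Finset.mem_product, Finset.mem_singleton] at hxy
  obtain ⟨hx, rfl⟩ := hxy
  exact h x hx

lemma cnt_singleton_left {D : Finset α} {t : α} (h : ∀ y ∈ D, y < t) :
    cnt {t} D = 0 := by
  unfold cnt
  rw [Finset.card_eq_zero, Finset.filter_false_of_mem]
  rintro ⟨x, y⟩ hxy
  rw [Finset.mem_product, Finset.mem_singleton] at hxy
  obtain ⟨rfl, hy⟩ := hxy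
  exact not_lt.2 (h y hy).le

theorem qbinom (R : Type) [CommRing R] :
    ∀ (m : ℕ) (T : Finset α), T.card = m → ∀ k, k ≤ m →
      qFact R k * qFact R (m - k) *
        ∑ S ∈ T.powersetCard k, (X : Polynomial R) ^ cnt S (T \ S) = qFact R m := by
  intro m
  induction m with
  | zero =>
    intro T hT k hk
    interval_cases k
    rw [Finset.card_eq_zero] at hT
    subst hT
    simp [qFact_zero, cnt]
  | succ m IH =>
    intro T hT k hk
    have hne : T.Nonempty := by rw [← Finset.card_pos, hT]; omega
    set t := T.max' hne with ht
    set T₀ := T.erase t with hT₀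
    have htT : t ∈ T := T.max'_mem hne
    have htT₀ : t ∉ T₀ := Finset.notMem_erase _ _
    have hcard₀ : T₀.card = m := by
      rw [hT₀, Finset.card_erase_of_mem htT, hT]
      omega
    have hlt : ∀ x ∈ T₀, x < t := by
      intro x hx
      exact lt_of_le_of_ne (T.le_max' x (Finset.mem_of_mem_erase hx))
        (Finset.ne_of_mem_erase hx)
    have hTi : T = insert t T₀ := (Finset.insert_erase htT).symm
    match k with
    | 0 =>
      simp [qFact_zero, Finset.powersetCard_zero, cnt]
    | k' + 1 =>
      have hsplit : T.powersetCard (k' + 1)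
          = T₀.powersetCard (k' + 1) ∪ (T₀.powersetCard k').image (insert t) := by
        rw [hTi]; exact Finset.powersetCard_succ_insert htT₀ k'
      have hdisj : Disjoint (T₀.powersetCard (k' + 1)) ((T₀.powersetCard k').image (insert t)) := by
        rw [Finset.disjoint_left]
        intro S hS hS'
        rw [Finset.mem_powersetCard] at hS
        rw [Finset.mem_image] at hS'
        obtain ⟨S₀, _, rfl⟩ := hS'
        exact htT₀ (hS.1 (Finset.mem_insert_self t S₀))
      have hinj : ∀ S₁ ∈ T₀.powersetCard k', ∀ S₂ ∈ T₀.powersetCard k',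
          insert t S₁ = insert t S₂ → S₁ = S₂ := by
        intro S₁ h₁ S₂ h₂ he
        rw [Finset.mem_powersetCard] at h₁ h₂
        have ht₁ : t ∉ S₁ := fun hc => htT₀ (h₁.1 hc)
        have ht₂ : t ∉ S₂ := fun hc => htT₀ (h₂.1 hc)
        ext x
        constructor
        · intro hx
          have : x ∈ insert t S₂ := he ▸ Finset.mem_insert_of_mem hx
          rcases Finset.mem_insert.1 this with rfl | hx2
          · exact absurd hx ht₁
          · exact hx2
        · intro hx
          have : x ∈ insert t S₁ := he ▸ Finset.mem_insert_of_mem hx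
          rcases Finset.mem_insert.1 this with rfl | hx2
          · exact absurd hx ht₂
          · exact hx2
      -- stat for S ⊆ T₀ of card k'+1
      have hstat1 : ∀ S ∈ T₀.powersetCard (k' + 1),
          cnt S (T \ S) = cnt S (T₀ \ S) + (k' + 1) := by
        intro S hS
        rw [Finset.mem_powersetCard] at hS
        have htS : t ∉ S := fun hc => htT₀ (hS.1 hc)
        have : T \ S = insert t (T₀ \ S) := by
          rw [hTi, Finset.insert_sdiff_of_notMem _ htS]
        rw [this, Finset.insert_eq, union_comm, cnt_union_right (by
          simp [Finset.disjoint_singleton_right, htT₀]),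
          cnt_singleton_right (fun x hx => hlt x (hS.1 hx)), hS.2]
      have hstat2 : ∀ S₀ ∈ T₀.powersetCard k',
          cnt (insert t S₀) (T \ insert t S₀) = cnt S₀ (T₀ \ S₀) := by
        intro S₀ hS₀
        rw [Finset.mem_powersetCard] at hS₀
        have htS : t ∉ S₀ := fun hc => htT₀ (hS₀.1 hc)
        have hTs : T \ insert t S₀ = T₀ \ S₀ := by
          ext x
          simp only [Finset.mem_sdiff, Finset.mem_insert, hT₀, Finset.mem_erase, not_or]
          tauto
        rw [hTs, Finset.insert_eq, cnt_union_left (by simp [Finset.disjoint_singleton_left, htS]),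
          cnt_singleton_left (fun y hy => hlt y (Finset.mem_sdiff.1 hy).1), zero_add]
      rw [hsplit, Finset.sum_union hdisj, Finset.sum_image hinj,
        Finset.sum_congr rfl (fun S hS => by rw [hstat1 S hS] :
          ∀ S ∈ T₀.powersetCard (k' + 1), (X : Polynomial R) ^ cnt S (T \ S)
            = X ^ (cnt S (T₀ \ S) + (k' + 1))),
        Finset.sum_congr rfl (fun S₀ hS₀ => by rw [hstat2 S₀ hS₀] :
          ∀ S₀ ∈ T₀.powersetCard k', (X : Polynomial R) ^ cnt (insert t S₀) (T \ insert t S₀)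
            = X ^ cnt S₀ (T₀ \ S₀))]
      set A : Polynomial R := ∑ S ∈ T₀.powersetCard (k' + 1), (X : Polynomial R) ^ cnt S (T₀ \ S)
        with hA
      set B : Polynomial R := ∑ S ∈ T₀.powersetCard k', (X : Polynomial R) ^ cnt S (T₀ \ S)
        with hB
      have hsum : (∑ S ∈ T₀.powersetCard (k' + 1),
          (X : Polynomial R) ^ (cnt S (T₀ \ S) + (k' + 1))) = X ^ (k' + 1) * A := by
        rw [hA, Finset.mul_sum]
        exact Finset.sum_congr rfl fun S _ => by rw [pow_add, mul_comm]
      rw [hsum]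
      have IH2 : qFact R k' * qFact R (m - k') * B = qFact R m :=
        IH T₀ hcard₀ k' (by omega)
      by_cases hkm : k' + 1 ≤ m
      · have IH1 : qFact R (k' + 1) * qFact R (m - (k' + 1)) * A = qFact R m :=
          IH T₀ hcard₀ (k' + 1) hkm
        have e1 : m + 1 - (k' + 1) = (m - (k' + 1)) + 1 := by omega
        have e2 : m - k' = m + 1 - (k' + 1) := by omega
        have efact : qFact R (m + 1 - (k' + 1)) = qNum R (m + 1 - (k' + 1)) * qFact R (m - (k' + 1)) := by
          rw [e1, qFact_succ, ← e1]
        have efact2 : qFact R (k' + 1) = qNum R (k' + 1) * qFact R k' := qFact_succ R k'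
        have expand : qFact R (k' + 1) * qFact R (m + 1 - (k' + 1)) * (X ^ (k' + 1) * A + B)
            = X ^ (k' + 1) * qNum R (m + 1 - (k' + 1)) *
                (qFact R (k' + 1) * qFact R (m - (k' + 1)) * A)
              + qNum R (k' + 1) * (qFact R k' * qFact R (m - k') * B) := by
          have efact3 : qFact R (m - k') = qNum R (m - k') * qFact R (m - (k' + 1)) := by
            rw [show m - k' = m - (k' + 1) + 1 by omega, qFact_succ,
              show m - (k' + 1) + 1 = m - k' by omega]
          rw [efact, efact2, ← e2, efact3]
          ring
        rw [expand, IH1, IH2, ← add_mul]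
        have : (X : Polynomial R) ^ (k' + 1) * qNum R (m + 1 - (k' + 1)) + qNum R (k' + 1)
            = qNum R (m + 1) := by
          have := qNum_add R (k' + 1) (m + 1 - (k' + 1))
          rw [show k' + 1 + (m + 1 - (k' + 1)) = m + 1 by omega] at this
          rw [this]; ring
        rw [this, ← qFact_succ]
      · have hA0 : A = 0 := by
          rw [hA, Finset.powersetCard_eq_empty.2 (by omega), Finset.sum_empty]
        rw [hA0, mul_zero, zero_add]
        have hk1 : k' = m := by omega
        have : qFact R (k' + 1) * qFact R (m + 1 - (k' + 1)) * B
            = qNum R (m + 1) * (qFact R k' * qFact R (m - k') * B) := by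
          rw [show m + 1 - (k' + 1) = 0 by omega, show m - k' = 0 by omega, hk1, qFact_succ,
            qFact_zero]
          ring
        rw [this, IH2, ← qFact_succ]

end GenHessAux2

namespace GenHessAux3

open GenHess GenHessAux Finset
open scoped Classical

noncomputable section

variable {N : ℕ}

/-- extend a subtype coloring to a total function -/
def extFun (n : ℕ) (I : Finset ℕ) (γ : {x // x ∈ verts n I} → Finset (Fin N)) :
    ℕ → Finset (Fin N) :=
  fun v => if hv : v ∈ verts n I then γ ⟨v, hv⟩ else ∅

/-- ascent statistic as a sum over a finset of ℕ -/
def ascFset (h : ℕ → ℕ) (V : Finset ℕ) (g : ℕ → Finset (Fin N)) : ℕ :=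
  ∑ v ∈ V, ∑ u ∈ V, if v < u ∧ u ≤ h v then cnt (g v) (g u) else 0

def monFset (V : Finset ℕ) (g : ℕ → Finset (Fin N)) : MvPolynomial (Fin N) ℤ :=
  ∏ v ∈ V, ∏ a ∈ g v, MvPolynomial.X a

lemma asc_eq (n : ℕ) (I : Finset ℕ) (h : ℕ → ℕ)
    (γ : {x // x ∈ verts n I} → Finset (Fin N)) :
    asc n I h γ = ascFset h (verts n I) (extFun n I γ) := by
  have hterm : ∀ v u : {x // x ∈ verts n I},
      (if v.1 < u.1 ∧ u.1 ≤ h v.1 then ((γ v ×ˢ γ u).filter fun ab => ab.1 < ab.2).card else 0)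
        = if v.1 < u.1 ∧ u.1 ≤ h v.1 then cnt (extFun n I γ v.1) (extFun n I γ u.1) else 0 := by
    intro v u
    simp only [extFun, cnt, dif_pos v.2, dif_pos u.2]
  calc asc n I h γ
      = ∑ v ∈ (verts n I).attach, ∑ u ∈ (verts n I).attach,
          (fun x y : ℕ => if x < y ∧ y ≤ h x then cnt (extFun n I γ x) (extFun n I γ y) else 0)
            v.1 u.1 := by
        unfold asc
        rw [Finset.univ_eq_attach]
        exact Finset.sum_congr rfl fun v _ => Finset.sum_congr rfl fun u _ => hterm v u
    _ = ∑ v ∈ (verts n I).attach, ∑ u ∈ verts n I,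
          (fun x y : ℕ => if x < y ∧ y ≤ h x then cnt (extFun n I γ x) (extFun n I γ y) else 0)
            v.1 u :=
        Finset.sum_congr rfl fun v _ => Finset.sum_attach (verts n I)
          (fun y : ℕ => if v.1 < y ∧ y ≤ h v.1 then cnt (extFun n I γ v.1) (extFun n I γ y) else 0)
    _ = ascFset h (verts n I) (extFun n I γ) := by
        unfold ascFset
        exact Finset.sum_attach (verts n I) (fun x : ℕ => ∑ u ∈ verts n I,
          if x < u ∧ u ≤ h x then cnt (extFun n I γ x) (extFun n I γ u) else 0)

lemma mon_eq (n : ℕ) (I : Finset ℕ) (γ : {x // x ∈ verts n I} → Finset (Fin N)) :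
    (∏ v : {x // x ∈ verts n I}, ∏ a ∈ γ v, MvPolynomial.X (R := ℤ) a)
      = monFset (verts n I) (extFun n I γ) := by
  calc (∏ v : {x // x ∈ verts n I}, ∏ a ∈ γ v, MvPolynomial.X (R := ℤ) a)
      = ∏ v ∈ (verts n I).attach,
          (fun x : ℕ => ∏ a ∈ extFun n I γ x, MvPolynomial.X (R := ℤ) a) v.1 := by
        rw [Finset.univ_eq_attach]
        exact Finset.prod_congr rfl fun v _ => by
          simp only [extFun, dif_pos v.2]
    _ = monFset (verts n I) (extFun n I γ) := by
        unfold monFset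
        exact Finset.prod_attach (verts n I)
          (fun x : ℕ => ∏ a ∈ extFun n I γ x, MvPolynomial.X (R := ℤ) a)


lemma mem_verts_erase {n b v : ℕ} (I : Finset ℕ) (hv : v ∈ verts n I) (hvb : v ≠ b) :
    v ∈ verts n (I.erase b) := by
  unfold verts at *
  rcases Finset.mem_insert.1 hv with rfl | hvI
  · exact Finset.mem_insert_self _ _
  · exact Finset.mem_insert_of_mem (Finset.mem_erase.2 ⟨hvb, hvI⟩)

lemma mem_verts_of_mem_erase {n b v : ℕ} {I : Finset ℕ} (hv : v ∈ verts n (I.erase b)) :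
    v ∈ verts n I := by
  unfold verts at *
  rcases Finset.mem_insert.1 hv with rfl | hvI
  · exact Finset.mem_insert_self _ _
  · exact Finset.mem_insert_of_mem (Finset.mem_of_mem_erase hvI)

/-- the split coloring -/
def splitC (n : ℕ) (I : Finset ℕ) (b c : ℕ) (hcV' : c ∈ verts n (I.erase b))
    (γ' : {x // x ∈ verts n (I.erase b)} → Finset (Fin N)) (S : Finset (Fin N)) :
    {x // x ∈ verts n I} → Finset (Fin N) :=
  fun v => if v.1 = c then γ' ⟨c, hcV'⟩ \ S
    else if hvb : v.1 = b then S
    else γ' ⟨v.1, mem_verts_erase I v.2 hvb⟩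

/-- the merged coloring -/
def mergeC (n : ℕ) (I : Finset ℕ) (b c : ℕ) (hbV : b ∈ verts n I) (hcV : c ∈ verts n I)
    (γ : {x // x ∈ verts n I} → Finset (Fin N)) :
    {x // x ∈ verts n (I.erase b)} → Finset (Fin N) :=
  fun v => if v.1 = c then γ ⟨b, hbV⟩ ∪ γ ⟨c, hcV⟩ else γ ⟨v.1, mem_verts_of_mem_erase v.2⟩

lemma extFun_splitC (n : ℕ) (I : Finset ℕ) (b c : ℕ) (hbV : b ∈ verts n I)
    (hcV' : c ∈ verts n (I.erase b))
    (γ' : {x // x ∈ verts n (I.erase b)} → Finset (Fin N)) (S : Finset (Fin N)) :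
    extFun n I (splitC n I b c hcV' γ' S)
      = fun v => if v = c then extFun n (I.erase b) γ' c \ S
          else if v = b then S else extFun n (I.erase b) γ' v := by
  funext v
  by_cases hv : v ∈ verts n I
  · rw [extFun, dif_pos hv]
    unfold splitC
    by_cases hvc : v = c
    · subst hvc
      rw [if_pos rfl, if_pos rfl, extFun, dif_pos hcV']
    · rw [if_neg hvc, if_neg hvc]
      by_cases hvb : v = b
      · subst hvb
        rw [dif_pos rfl, if_pos rfl]
      · rw [dif_neg hvb, if_neg hvb, extFun, dif_pos (mem_verts_erase I hv hvb)]
  · have hvc : v ≠ c := fun he => hv (he ▸ mem_verts_of_mem_erase hcV')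
    have hvb : v ≠ b := fun he => hv (he ▸ hbV)
    rw [extFun, dif_neg hv, if_neg hvc, if_neg hvb, extFun,
      dif_neg (fun hc => hv (mem_verts_of_mem_erase hc))]

lemma monFset_split (V' : Finset ℕ) (b c : ℕ) (hbV' : b ∉ V') (hcV' : c ∈ V') (hbc : b ≠ c)
    (g' : ℕ → Finset (Fin N)) (S : Finset (Fin N)) (hS : S ⊆ g' c) :
    monFset (insert b V') (fun v => if v = c then g' c \ S else if v = b then S else g' v)
      = monFset V' g' := by
  have hgb : (if b = c then g' c \ S else if b = b then S else g' b) = S := by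
    rw [if_neg hbc, if_pos rfl]
  have hgc : (if c = c then g' c \ S else if c = b then S else g' c) = g' c \ S := if_pos rfl
  unfold monFset
  rw [Finset.prod_insert hbV',
    ← Finset.mul_prod_erase V'
      (fun v => ∏ a ∈ (if v = c then g' c \ S else if v = b then S else g' v),
        MvPolynomial.X (R := ℤ) a) hcV',
    ← Finset.mul_prod_erase V' (fun v => ∏ a ∈ g' v, MvPolynomial.X (R := ℤ) a) hcV']
  beta_reduce
  rw [hgb, hgc]
  rw [← mul_assoc, ← Finset.prod_union sdiff_disjoint.symm, Finset.union_sdiff_of_subset hS]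
  congr 1
  refine Finset.prod_congr rfl fun v hv => ?_
  rw [if_neg (Finset.ne_of_mem_erase hv),
    if_neg (fun he : v = b => hbV' (by rw [← he]; exact Finset.mem_of_mem_erase hv))]


lemma ascFset_split (h : ℕ → ℕ) (V' : Finset ℕ) (b c : ℕ) (hbV' : b ∉ V') (hcV' : c ∈ V')
    (hbc : b < c) (hchb : c ≤ h b) (hval : h b = h c)
    (H1 : ∀ v ∈ V', v < b ↔ v < c)
    (H2 : ∀ v ∈ V', v < b → (b ≤ h v ↔ c ≤ h v))
    (H4 : ∀ u ∈ V', b < u → c ≤ u)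
    (g' : ℕ → Finset (Fin N)) (S : Finset (Fin N)) (hS : S ⊆ g' c) :
    ascFset h (insert b V') (fun v => if v = c then g' c \ S else if v = b then S else g' v)
      = ascFset h V' g' + cnt S (g' c \ S) := by
  set g : ℕ → Finset (Fin N) := fun v => if v = c then g' c \ S else if v = b then S else g' v
    with hgdef
  have hgb : g b = S := by rw [hgdef]; beta_reduce; rw [if_neg hbc.ne, if_pos rfl]
  have hgc : g c = g' c \ S := by rw [hgdef]; beta_reduce; rw [if_pos rfl]
  have hgo : ∀ v, v ∈ V' → v ≠ c → g v = g' v := by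
    intro v hv hvc
    have hvb : v ≠ b := fun he => hbV' (he ▸ hv)
    rw [hgdef]; beta_reduce; rw [if_neg hvc, if_neg hvb]
  have hcnt : ∀ X : Finset (Fin N), cnt (g' c) X = cnt S X + cnt (g' c \ S) X := by
    intro X
    rw [← Finset.union_sdiff_of_subset hS, cnt_union_left sdiff_disjoint.symm,
      Finset.union_sdiff_of_subset hS]
  have hcnt' : ∀ X : Finset (Fin N), cnt X (g' c) = cnt X S + cnt X (g' c \ S) := by
    intro X
    rw [← Finset.union_sdiff_of_subset hS, cnt_union_right sdiff_disjoint.symm,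
      Finset.union_sdiff_of_subset hS]
  have step1 : ascFset h (insert b V') g
      = (∑ u ∈ V', if b < u ∧ u ≤ h b then cnt (g b) (g u) else 0)
        + ((∑ v ∈ V', if v < b ∧ b ≤ h v then cnt (g v) (g b) else 0)
            + ∑ v ∈ V', ∑ u ∈ V', if v < u ∧ u ≤ h v then cnt (g v) (g u) else 0) := by
    unfold ascFset
    rw [Finset.sum_insert hbV']
    congr 1
    · rw [Finset.sum_insert hbV', if_neg (fun hcon => lt_irrefl b hcon.1), zero_add]
    · rw [← Finset.sum_add_distrib]
      exact Finset.sum_congr rfl fun v _ => Finset.sum_insert hbV'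
  have step2 : (∑ u ∈ V', if b < u ∧ u ≤ h b then cnt (g b) (g u) else 0)
      = cnt S (g' c \ S) + ∑ u ∈ V', (if c < u ∧ u ≤ h c then cnt S (g' u) else 0) := by
    have hpt : ∀ u ∈ V', (if b < u ∧ u ≤ h b then cnt (g b) (g u) else 0)
        = (if u = c then cnt S (g' c \ S) else 0)
          + (if c < u ∧ u ≤ h c then cnt S (g' u) else 0) := by
      intro u hu
      by_cases huc : u = c
      · subst huc
        rw [if_pos rfl, if_pos ⟨hbc, hchb⟩, if_neg (fun hcon => lt_irrefl u hcon.1), add_zero,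
          hgb, hgc]
      · rw [if_neg huc, zero_add, hgo u hu huc, hgb]
        by_cases hcond : c < u ∧ u ≤ h c
        · rw [if_pos hcond, if_pos ⟨hbc.trans hcond.1, hval ▸ hcond.2⟩]
        · rw [if_neg hcond, if_neg (fun hcon => hcond
            ⟨lt_of_le_of_ne (H4 u hu hcon.1) (Ne.symm huc), hval ▸ hcon.2⟩)]
    rw [Finset.sum_congr rfl hpt, Finset.sum_add_distrib, Finset.sum_ite_eq' V' c
      (fun _ => cnt S (g' c \ S)), if_pos hcV']
  have step3 : (∑ v ∈ V', if v < b ∧ b ≤ h v then cnt (g v) (g b) else 0)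
      = ∑ v ∈ V', (if v < c ∧ c ≤ h v then cnt (g' v) S else 0) := by
    refine Finset.sum_congr rfl fun v hv => ?_
    by_cases hvc : v = c
    · subst hvc
      rw [if_neg (fun hcon => absurd hcon.1 (not_lt.2 hbc.le)),
        if_neg (fun hcon => lt_irrefl v hcon.1)]
    · rw [hgo v hv hvc, hgb]
      by_cases hcond : v < b ∧ b ≤ h v
      · rw [if_pos hcond, if_pos ⟨(H1 v hv).1 hcond.1, (H2 v hv hcond.1).1 hcond.2⟩]
      · rw [if_neg hcond, if_neg (fun hcon => hcond
          ⟨(H1 v hv).2 hcon.1, (H2 v hv ((H1 v hv).2 hcon.1)).2 hcon.2⟩)]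
  have step4 : ascFset h V' g'
      = (∑ v ∈ V', ∑ u ∈ V', if v < u ∧ u ≤ h v then cnt (g v) (g u) else 0)
        + ((∑ u ∈ V', if c < u ∧ u ≤ h c then cnt S (g' u) else 0)
          + ∑ v ∈ V', (if v < c ∧ c ≤ h v then cnt (g' v) S else 0)) := by
    have hpt : ∀ v ∈ V', ∀ u ∈ V',
        (if v < u ∧ u ≤ h v then cnt (g' v) (g' u) else 0)
        = (if v < u ∧ u ≤ h v then cnt (g v) (g u) else 0)
          + ((if v = c then (if c < u ∧ u ≤ h c then cnt S (g' u) else 0) else 0)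
            + (if u = c then (if v < c ∧ c ≤ h v then cnt (g' v) S else 0) else 0)) := by
      intro v hv u hu
      by_cases hvc : v = c
      · subst hvc
        rw [if_pos rfl]
        by_cases huc : u = v
        · subst huc
          rw [if_neg (fun hcon => lt_irrefl u hcon.1), if_neg (fun hcon => lt_irrefl u hcon.1),
            if_neg (fun hcon => lt_irrefl u hcon.1), if_pos rfl,
            if_neg (fun hcon => lt_irrefl u hcon.1)]
        · rw [if_neg huc, add_zero, hgc, hgo u hu huc]
          by_cases hcond : v < u ∧ u ≤ h v
          · rw [if_pos hcond, if_pos hcond, if_pos hcond, hcnt (g' u), add_comm]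
          · rw [if_neg hcond, if_neg hcond, if_neg hcond, add_zero]
      · rw [if_neg hvc, zero_add, hgo v hv hvc]
        by_cases huc : u = c
        · subst huc
          rw [if_pos rfl, hgc]
          by_cases hcond : v < u ∧ u ≤ h v
          · rw [if_pos hcond, if_pos hcond, if_pos hcond, hcnt' (g' v)]
            exact Nat.add_comm _ _
          · rw [if_neg hcond, if_neg hcond, if_neg hcond, add_zero]
        · rw [if_neg huc, add_zero, hgo u hu huc]
    calc ascFset h V' g'
        = ∑ v ∈ V', ∑ u ∈ V',
            ((if v < u ∧ u ≤ h v then cnt (g v) (g u) else 0)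
              + ((if v = c then (if c < u ∧ u ≤ h c then cnt S (g' u) else 0) else 0)
                + (if u = c then (if v < c ∧ c ≤ h v then cnt (g' v) S else 0) else 0))) := by
          unfold ascFset
          exact Finset.sum_congr rfl fun v hv => Finset.sum_congr rfl fun u hu => hpt v hv u hu
      _ = _ := by
          rw [Finset.sum_congr rfl (fun v (_ : v ∈ V') => Finset.sum_add_distrib),
            Finset.sum_add_distrib]
          congr 1
          rw [Finset.sum_congr rfl (fun v (_ : v ∈ V') => Finset.sum_add_distrib),
            Finset.sum_add_distrib]
          congr 1
          · have hpull : ∀ v ∈ V',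
                (∑ u ∈ V', if v = c then (if c < u ∧ u ≤ h c then cnt S (g' u) else 0) else 0)
                = (if v = c then (∑ u ∈ V', if c < u ∧ u ≤ h c then cnt S (g' u) else 0)
                    else 0) := by
              intro v _
              split_ifs with hv
              · rfl
              · exact Finset.sum_const_zero
            rw [Finset.sum_congr rfl hpull, Finset.sum_ite_eq' V' c
              (fun _ => ∑ u ∈ V', if c < u ∧ u ≤ h c then cnt S (g' u) else 0), if_pos hcV']
          · refine Finset.sum_congr rfl fun v _ => ?_
            rw [Finset.sum_ite_eq' V' c
              (fun _ => if v < c ∧ c ≤ h v then cnt (g' v) S else 0), if_pos hcV']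
  rw [step1, step2, step3, step4]
  omega

end

end GenHessAux3

open GenHess

/-- Theorem 26, eq. (30a): if the vertex `b = i_k ∈ I` has `h b = h c` for its successor
vertex `c = i_{k+1}` and nothing maps to `b`, then
`[b-a]_q! [c-b]_q! csf(h) = [c-a]_q! csf(h|_{I'∪{n}})` where `a = i_{k-1}` and `I' = I \ {b}`. -/
theorem grassmannian_bundle_csf (n : ℕ) (I : Finset ℕ) (h : ℕ → ℕ)
    (hgen : IsGenHess n I h)
    (b : ℕ) (hb : b ∈ I)
    (a : ℕ) (ha : a = ((verts n I).filter (fun u => u < b)).sup id)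
    (c : ℕ) (hc : c ∈ verts n I) (hbc : b < c)
    (hsucc : ∀ u ∈ verts n I, b < u → c ≤ u)
    (hval : h b = h c)
    (hnopre : ∀ i ∈ verts n I, h i ≠ b)
    (N : ℕ) (hN : 1 ≤ N) :
    qFact (MvPolynomial (Fin N) ℤ) (b - a) * qFact (MvPolynomial (Fin N) ℤ) (c - b) *
      csf n I h N =
    qFact (MvPolynomial (Fin N) ℤ) (c - a) * csf n (I.erase b) h N := by
  classical
  obtain ⟨hI, hmaps, hge, hmono⟩ := hgen
  set R := MvPolynomial (Fin N) ℤ with hR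
  -- basic facts
  have hb1 : 1 ≤ b ∧ b ≤ n - 1 := hI b hb
  have hbV : b ∈ verts n I := Finset.mem_insert_of_mem hb
  have hn2 : 2 ≤ n := by omega
  have hbn : b ≠ n := by omega
  have hbV' : b ∉ verts n (I.erase b) := by
    unfold verts
    rw [Finset.mem_insert]
    rintro (rfl | hmem)
    · exact hbn rfl
    · exact (Finset.mem_erase.1 hmem).1 rfl
  have hcb : c ≠ b := hbc.ne'
  have hcV' : c ∈ verts n (I.erase b) := GenHessAux3.mem_verts_erase I hc hcb
  have hVins : verts n I = insert b (verts n (I.erase b)) := by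
    unfold verts
    rw [Finset.insert_comm, Finset.insert_erase hb]
  have halt : a < b := by
    rw [ha]
    exact Finset.sup_lt_iff (show (⊥ : ℕ) < b by
        simp only [Nat.bot_eq_zero]; omega) |>.2
      (fun u hu => (Finset.mem_filter.1 hu).2)
  have hhbV : h b ∈ verts n I := hmaps b hbV
  have hhb_gt : b < h b := lt_of_le_of_ne (hge b hbV) (Ne.symm (hnopre b hbV))
  have hchb : c ≤ h b := hsucc (h b) hhbV hhb_gt
  have hE1 : ∀ v ∈ verts n I, v < b → (b ≤ h v ↔ c ≤ h v) := by
    intro v hv hvb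
    constructor
    · intro hbh
      exact hsucc (h v) (hmaps v hv) (lt_of_le_of_ne hbh (Ne.symm (hnopre v hv)))
    · intro hch; omega
  -- weight facts
  have hwb : wt n I b = b - a := by rw [wt, ← ha]
  have hsupc : ((verts n I).filter (fun u => u < c)).sup id = b := by
    apply le_antisymm
    · apply Finset.sup_le
      intro u hu
      obtain ⟨huV, huc⟩ := Finset.mem_filter.1 hu
      show u ≤ b
      by_contra hgt
      have := hsucc u huV (by omega)
      omega
    · exact Finset.le_sup (f := id) (Finset.mem_filter.2 ⟨hbV, hbc⟩)
  have hwc : wt n I c = c - b := by rw [wt, hsupc]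
  have hfilter' : (verts n (I.erase b)).filter (fun u => u < c)
      = (verts n I).filter (fun u => u < b) := by
    ext u
    simp only [Finset.mem_filter]
    constructor
    · rintro ⟨huV', huc⟩
      have huV : u ∈ verts n I := GenHessAux3.mem_verts_of_mem_erase huV'
      have hub : u ≠ b := fun he => hbV' (he ▸ huV')
      have hle : u ≤ b := by
        by_contra hgt
        have := hsucc u huV (by omega)
        omega
      exact ⟨huV, by omega⟩
    · rintro ⟨huV, hub⟩
      exact ⟨GenHessAux3.mem_verts_erase I huV (by omega), by omega⟩
  have hwc' : wt n (I.erase b) c = c - a := by rw [wt, hfilter', ← ha]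
  have hwother : ∀ v ∈ verts n (I.erase b), v ≠ c → wt n (I.erase b) v = wt n I v := by
    intro v hvV' hvc
    have hvV : v ∈ verts n I := GenHessAux3.mem_verts_of_mem_erase hvV'
    have hsup : ((verts n (I.erase b)).filter (fun u => u < v)).sup id
        = ((verts n I).filter (fun u => u < v)).sup id := by
      apply le_antisymm
      · exact Finset.sup_mono (Finset.filter_subset_filter _
          (fun x hx => GenHessAux3.mem_verts_of_mem_erase hx))
      · apply Finset.sup_le
        intro u hu
        obtain ⟨huV, huv⟩ := Finset.mem_filter.1 hu
        by_cases hub : u = b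
        · obtain rfl := hub.symm
          have hcv : c ≤ v := hsucc v hvV huv
          have hcv' : c < v := lt_of_le_of_ne hcv (Ne.symm hvc)
          exact le_trans (le_of_lt hbc) (Finset.le_sup (f := id)
            (Finset.mem_filter.2 ⟨hcV', hcv'⟩))
        · exact Finset.le_sup (f := id)
            (Finset.mem_filter.2 ⟨GenHessAux3.mem_verts_erase I huV hub, huv⟩)
    rw [wt, wt, hsup]
  -- hypotheses for ascFset_split
  have hH1 : ∀ v ∈ verts n (I.erase b), (v < b ↔ v < c) := by
    intro v hv
    have hvV : v ∈ verts n I := GenHessAux3.mem_verts_of_mem_erase hv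
    have hvb : v ≠ b := fun he => hbV' (he ▸ hv)
    constructor
    · intro h1; omega
    · intro h1
      by_contra h2
      have := hsucc v hvV (by omega)
      omega
  have hH2 : ∀ v ∈ verts n (I.erase b), v < b → (b ≤ h v ↔ c ≤ h v) :=
    fun v hv => hE1 v (GenHessAux3.mem_verts_of_mem_erase hv)
  have hH4 : ∀ u ∈ verts n (I.erase b), b < u → c ≤ u :=
    fun u hu => hsucc u (GenHessAux3.mem_verts_of_mem_erase hu)
  -- properness of split colorings
  have hP2 : ∀ γ' : {x // x ∈ verts n (I.erase b)} → Finset (Fin N),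
      IsProper n (I.erase b) h γ' → ∀ S, S ⊆ γ' ⟨c, hcV'⟩ → S.card = b - a →
      IsProper n I h (GenHessAux3.splitC n I b c hcV' γ' S) := by
    intro γ' hprop S hSsub hScard
    obtain ⟨hcard, hdisj⟩ := hprop
    constructor
    · rintro ⟨v, hv⟩
      have hcardc : (γ' ⟨c, hcV'⟩).card = c - a := by
        rw [← hwc']
        exact hcard ⟨c, hcV'⟩
      show (GenHessAux3.splitC n I b c hcV' γ' S ⟨v, hv⟩).card = wt n I v
      simp only [GenHessAux3.splitC]
      by_cases hvc : v = c
      · rw [if_pos hvc, Finset.card_sdiff_of_subset hSsub, hcardc, hScard, hvc, hwc]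
        omega
      · rw [if_neg hvc]
        by_cases hvb : v = b
        · obtain rfl := hvb.symm
          rw [dif_pos rfl, hScard, hwb]
        · have h0 : (γ' ⟨v, GenHessAux3.mem_verts_erase I hv hvb⟩).card
              = wt n (I.erase b) v := hcard ⟨v, GenHessAux3.mem_verts_erase I hv hvb⟩
          rw [dif_neg hvb, h0, hwother v (GenHessAux3.mem_verts_erase I hv hvb) hvc]
    · rintro ⟨v, hv⟩ ⟨u, hu⟩ hvu huh
      simp only [GenHessAux3.splitC]
      simp only at hvu huh
      by_cases hvc : v = c
      · obtain rfl := hvc.symm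
        rw [if_pos rfl]
        have huc : u ≠ c := by omega
        have hub : u ≠ b := by omega
        rw [if_neg huc, dif_neg hub]
        exact Disjoint.mono_left Finset.sdiff_subset
          (hdisj ⟨c, hcV'⟩ ⟨u, GenHessAux3.mem_verts_erase I hu hub⟩ hvu huh)
      · rw [if_neg hvc]
        by_cases hvb : v = b
        · obtain rfl := hvb.symm
          rw [dif_pos rfl]
          by_cases huc : u = c
          · obtain rfl := huc.symm
            rw [if_pos rfl]
            exact Finset.sdiff_disjoint.symm
          · have hub : u ≠ b := by omega
            rw [if_neg huc, dif_neg hub]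
            have hcu : c < u := by
              have := hsucc u hu hvu
              omega
            refine Disjoint.mono_left hSsub
              (hdisj ⟨c, hcV'⟩ ⟨u, GenHessAux3.mem_verts_erase I hu hub⟩ hcu ?_)
            rw [← hval]
            exact huh
        · rw [dif_neg hvb]
          by_cases huc : u = c
          · obtain rfl := huc.symm
            rw [if_pos rfl]
            exact Disjoint.mono_right Finset.sdiff_subset
              (hdisj ⟨v, GenHessAux3.mem_verts_erase I hv hvb⟩ ⟨c, hcV'⟩ hvu huh)
          · by_cases hub : u = b
            · obtain rfl := hub.symm
              rw [if_neg huc, dif_pos rfl]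
              have hch : c ≤ h v := (hE1 v hv hvu).1 huh
              exact Disjoint.mono_right hSsub
                (hdisj ⟨v, GenHessAux3.mem_verts_erase I hv hvb⟩ ⟨c, hcV'⟩
                  (show v < c by omega) hch)
            · rw [if_neg huc, dif_neg hub]
              exact hdisj ⟨v, GenHessAux3.mem_verts_erase I hv hvb⟩
                ⟨u, GenHessAux3.mem_verts_erase I hu hub⟩ hvu huh
  -- properness of merged colorings
  have hP1 : ∀ γ : {x // x ∈ verts n I} → Finset (Fin N),
      IsProper n I h γ → IsProper n (I.erase b) h (GenHessAux3.mergeC n I b c hbV hc γ) := by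
    intro γ hprop
    obtain ⟨hcard, hdisj⟩ := hprop
    have hdisjbc : Disjoint (γ ⟨b, hbV⟩) (γ ⟨c, hc⟩) := hdisj ⟨b, hbV⟩ ⟨c, hc⟩ hbc hchb
    have hcardb : (γ ⟨b, hbV⟩).card = b - a := by
      rw [← hwb]
      exact hcard ⟨b, hbV⟩
    have hcardc2 : (γ ⟨c, hc⟩).card = c - b := by
      rw [← hwc]
      exact hcard ⟨c, hc⟩
    constructor
    · rintro ⟨v, hv⟩
      show (GenHessAux3.mergeC n I b c hbV hc γ ⟨v, hv⟩).card = wt n (I.erase b) v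
      simp only [GenHessAux3.mergeC]
      by_cases hvc : v = c
      · obtain rfl := hvc.symm
        rw [if_pos rfl, Finset.card_union_of_disjoint hdisjbc, hcardb, hcardc2, hwc']
        omega
      · have h0 : (γ ⟨v, GenHessAux3.mem_verts_of_mem_erase hv⟩).card
            = wt n I v := hcard ⟨v, GenHessAux3.mem_verts_of_mem_erase hv⟩
        rw [if_neg hvc, h0, hwother v hv hvc]
    · rintro ⟨v, hv⟩ ⟨u, hu⟩ hvu huh
      simp only [GenHessAux3.mergeC]
      simp only at hvu huh
      have hvb : v ≠ b := fun he => hbV' (he ▸ hv)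
      have hub : u ≠ b := fun he => hbV' (he ▸ hu)
      by_cases hvc : v = c
      · obtain rfl := hvc.symm
        rw [if_pos rfl, if_neg (by omega : ¬u = c)]
        refine Finset.disjoint_union_left.2 ⟨?_, ?_⟩
        · refine hdisj ⟨b, hbV⟩ ⟨u, GenHessAux3.mem_verts_of_mem_erase hu⟩
            (show b < u by omega) ?_
          show u ≤ h b
          rw [hval]; exact huh
        · exact hdisj ⟨c, hc⟩ ⟨u, GenHessAux3.mem_verts_of_mem_erase hu⟩ hvu huh
      · rw [if_neg hvc]
        by_cases huc : u = c
        · obtain rfl := huc.symm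
          rw [if_pos rfl]
          have hvltb : v < b := by
            have h1 := (hH1 v hv).2 hvu
            omega
          refine Finset.disjoint_union_right.2 ⟨?_, ?_⟩
          · exact hdisj ⟨v, GenHessAux3.mem_verts_of_mem_erase hv⟩ ⟨b, hbV⟩ hvltb
              (show b ≤ h v by omega)
          · exact hdisj ⟨v, GenHessAux3.mem_verts_of_mem_erase hv⟩ ⟨c, hc⟩ hvu huh
        · rw [if_neg huc]
          exact hdisj ⟨v, GenHessAux3.mem_verts_of_mem_erase hv⟩
            ⟨u, GenHessAux3.mem_verts_of_mem_erase hu⟩ hvu huh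
  -- the reindexing
  set Γ' : Finset ({x // x ∈ verts n (I.erase b)} → Finset (Fin N)) :=
    Finset.univ.filter (fun γ' => IsProper n (I.erase b) h γ') with hΓ'
  set Sig : Finset ((_ : {x // x ∈ verts n (I.erase b)} → Finset (Fin N)) × Finset (Fin N)) :=
    Γ'.sigma (fun γ' => (γ' ⟨c, hcV'⟩).powersetCard (b - a)) with hSig
  -- computation of the summand for a split coloring
  have hmonsplit : ∀ (γ' : {x // x ∈ verts n (I.erase b)} → Finset (Fin N)) (S : Finset (Fin N)),
      S ⊆ γ' ⟨c, hcV'⟩ →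
      (∏ v : {x // x ∈ verts n I}, ∏ x ∈ GenHessAux3.splitC n I b c hcV' γ' S v,
        MvPolynomial.X (R := ℤ) x)
      = ∏ v : {x // x ∈ verts n (I.erase b)}, ∏ x ∈ γ' v, MvPolynomial.X (R := ℤ) x := by
    intro γ' S hS
    have hSext : S ⊆ GenHessAux3.extFun n (I.erase b) γ' c := by
      rw [GenHessAux3.extFun, dif_pos hcV']
      exact hS
    rw [GenHessAux3.mon_eq, GenHessAux3.extFun_splitC n I b c hbV hcV', hVins,
      GenHessAux3.monFset_split _ b c hbV' hcV' hbc.ne _ S hSext, ← GenHessAux3.mon_eq]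
  have hascsplit : ∀ (γ' : {x // x ∈ verts n (I.erase b)} → Finset (Fin N)) (S : Finset (Fin N)),
      S ⊆ γ' ⟨c, hcV'⟩ →
      asc n I h (GenHessAux3.splitC n I b c hcV' γ' S)
      = asc n (I.erase b) h γ' + GenHessAux.cnt S (γ' ⟨c, hcV'⟩ \ S) := by
    intro γ' S hS
    have hSext : S ⊆ GenHessAux3.extFun n (I.erase b) γ' c := by
      rw [GenHessAux3.extFun, dif_pos hcV']
      exact hS
    have hcext : GenHessAux3.extFun n (I.erase b) γ' c = γ' ⟨c, hcV'⟩ := by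
      rw [GenHessAux3.extFun, dif_pos hcV']
    rw [GenHessAux3.asc_eq, GenHessAux3.extFun_splitC n I b c hbV hcV', hVins,
      GenHessAux3.ascFset_split h _ b c hbV' hcV' hbc hchb hval hH1 hH2 hH4 _ S hSext,
      ← GenHessAux3.asc_eq, hcext]
  have hreindex : csf n I h N = ∑ p ∈ Sig,
      Polynomial.C (∏ v : {x // x ∈ verts n (I.erase b)}, ∏ x ∈ p.1 v, MvPolynomial.X x)
        * Polynomial.X ^ (asc n (I.erase b) h p.1
            + GenHessAux.cnt p.2 (p.1 ⟨c, hcV'⟩ \ p.2)) := by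
    rw [csf]
    refine Finset.sum_nbij'
      (i := fun γ => (⟨GenHessAux3.mergeC n I b c hbV hc γ, γ ⟨b, hbV⟩⟩ :
        (_ : {x // x ∈ verts n (I.erase b)} → Finset (Fin N)) × Finset (Fin N)))
      (j := fun p => GenHessAux3.splitC n I b c hcV' p.1 p.2) ?_ ?_ ?_ ?_ ?_
    · intro γ hγ
      have hprop : IsProper n I h γ := (Finset.mem_filter.1 hγ).2
      rw [hSig, Finset.mem_sigma]
      constructor
      · rw [hΓ', Finset.mem_filter]
        exact ⟨Finset.mem_univ _, hP1 γ hprop⟩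
      · rw [Finset.mem_powersetCard]
        constructor
        · show γ ⟨b, hbV⟩ ⊆ GenHessAux3.mergeC n I b c hbV hc γ ⟨c, hcV'⟩
          simp only [GenHessAux3.mergeC, if_pos rfl]
          exact Finset.subset_union_left
        · rw [hprop.1 ⟨b, hbV⟩, hwb]
    · intro p hp
      rw [hSig, Finset.mem_sigma] at hp
      obtain ⟨hp1, hp2⟩ := hp
      rw [hΓ', Finset.mem_filter] at hp1
      rw [Finset.mem_powersetCard] at hp2
      rw [Finset.mem_filter]
      exact ⟨Finset.mem_univ _, hP2 p.1 hp1.2 p.2 hp2.1 hp2.2⟩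
    · -- left inverse : split (merge γ, γ b) = γ
      intro γ hγ
      have hprop : IsProper n I h γ := (Finset.mem_filter.1 hγ).2
      have hdisjbc : Disjoint (γ ⟨b, hbV⟩) (γ ⟨c, hc⟩) := hprop.2 ⟨b, hbV⟩ ⟨c, hc⟩ hbc hchb
      funext v
      obtain ⟨v, hv⟩ := v
      simp only [GenHessAux3.splitC, GenHessAux3.mergeC]
      by_cases hvc : v = c
      · obtain rfl := hvc.symm
        simp [Finset.union_sdiff_cancel_left hdisjbc, hbc.ne]
      · rw [if_neg hvc]
        by_cases hvb : v = b
        · obtain rfl := hvb.symm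
          simp
        · rw [dif_neg hvb, if_neg hvc]
    · -- right inverse : (merge (split γ' S), (split γ' S) b) = (γ', S)
      intro p hp
      rw [hSig, Finset.mem_sigma] at hp
      obtain ⟨hp1, hp2⟩ := hp
      rw [Finset.mem_powersetCard] at hp2
      obtain ⟨γ', S⟩ := p
      have h1 : GenHessAux3.mergeC n I b c hbV hc (GenHessAux3.splitC n I b c hcV' γ' S)
          = γ' := by
        funext v
        obtain ⟨v, hv⟩ := v
        simp only [GenHessAux3.mergeC, GenHessAux3.splitC]
        by_cases hvc : v = c
        · obtain rfl := hvc.symm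
          simp [Finset.union_sdiff_of_subset hp2.1, hbc.ne]
        · have hvb : v ≠ b := fun he => hbV' (he ▸ hv)
          rw [if_neg hvc, if_neg hvc, dif_neg hvb]
      have h2 : GenHessAux3.splitC n I b c hcV' γ' S ⟨b, hbV⟩ = S := by
        simp [GenHessAux3.splitC, hbc.ne]
      show (⟨_, _⟩ : (_ : {x // x ∈ verts n (I.erase b)} → Finset (Fin N)) × Finset (Fin N))
        = ⟨γ', S⟩
      beta_reduce
      rw [h1, h2]
    · -- summand computation
      intro γ hγ
      have hprop : IsProper n I h γ := (Finset.mem_filter.1 hγ).2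
      have hdisjbc : Disjoint (γ ⟨b, hbV⟩) (γ ⟨c, hc⟩) := hprop.2 ⟨b, hbV⟩ ⟨c, hc⟩ hbc hchb
      have hsplitmerge : GenHessAux3.splitC n I b c hcV'
          (GenHessAux3.mergeC n I b c hbV hc γ) (γ ⟨b, hbV⟩) = γ := by
        funext v
        obtain ⟨v, hv⟩ := v
        simp only [GenHessAux3.splitC, GenHessAux3.mergeC]
        by_cases hvc : v = c
        · obtain rfl := hvc.symm
          simp [Finset.union_sdiff_cancel_left hdisjbc, hbc.ne]
        · rw [if_neg hvc]
          by_cases hvb : v = b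
          · obtain rfl := hvb.symm
            simp
          · rw [dif_neg hvb, if_neg hvc]
      have hsub : γ ⟨b, hbV⟩ ⊆ GenHessAux3.mergeC n I b c hbV hc γ ⟨c, hcV'⟩ := by
        simp only [GenHessAux3.mergeC, if_pos rfl]
        exact Finset.subset_union_left
      calc Polynomial.C (∏ v : {x // x ∈ verts n I}, ∏ x ∈ γ v, MvPolynomial.X x)
            * Polynomial.X ^ asc n I h γ
          = Polynomial.C (∏ v : {x // x ∈ verts n I},
              ∏ x ∈ GenHessAux3.splitC n I b c hcV'
                (GenHessAux3.mergeC n I b c hbV hc γ) (γ ⟨b, hbV⟩) v, MvPolynomial.X x)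
            * Polynomial.X ^ asc n I h (GenHessAux3.splitC n I b c hcV'
                (GenHessAux3.mergeC n I b c hbV hc γ) (γ ⟨b, hbV⟩)) := by
            rw [hsplitmerge]
        _ = _ := by
            rw [hmonsplit _ _ hsub, hascsplit _ _ hsub]
  -- now the q-binomial step
  rw [hreindex, hSig, Finset.mul_sum, Finset.sum_sigma]
  have hinner : ∀ γ' ∈ Γ',
      (∑ S ∈ (γ' ⟨c, hcV'⟩).powersetCard (b - a),
        qFact R (b - a) * qFact R (c - b) *
          (Polynomial.C (∏ v : {x // x ∈ verts n (I.erase b)}, ∏ x ∈ γ' v, MvPolynomial.X x)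
            * Polynomial.X ^ (asc n (I.erase b) h γ'
                + GenHessAux.cnt S (γ' ⟨c, hcV'⟩ \ S))))
      = qFact R (c - a) *
          (Polynomial.C (∏ v : {x // x ∈ verts n (I.erase b)}, ∏ x ∈ γ' v, MvPolynomial.X x)
            * Polynomial.X ^ asc n (I.erase b) h γ') := by
    intro γ' hγ'
    have hprop : IsProper n (I.erase b) h γ' := by
      have := hγ'
      rw [hΓ', Finset.mem_filter] at this
      exact this.2
    have hTcard : (γ' ⟨c, hcV'⟩).card = c - a := by
      rw [hprop.1 ⟨c, hcV'⟩, hwc']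
    have hqb := GenHessAux2.qbinom R (c - a) (γ' ⟨c, hcV'⟩) hTcard (b - a) (by omega)
    rw [show (c - a) - (b - a) = c - b by omega] at hqb
    calc (∑ S ∈ (γ' ⟨c, hcV'⟩).powersetCard (b - a),
          qFact R (b - a) * qFact R (c - b) *
            (Polynomial.C (∏ v : {x // x ∈ verts n (I.erase b)}, ∏ x ∈ γ' v, MvPolynomial.X x)
              * Polynomial.X ^ (asc n (I.erase b) h γ'
                  + GenHessAux.cnt S (γ' ⟨c, hcV'⟩ \ S))))
        = (Polynomial.C (∏ v : {x // x ∈ verts n (I.erase b)}, ∏ x ∈ γ' v, MvPolynomial.X x)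
              * Polynomial.X ^ asc n (I.erase b) h γ')
          * (qFact R (b - a) * qFact R (c - b) *
              ∑ S ∈ (γ' ⟨c, hcV'⟩).powersetCard (b - a),
                (Polynomial.X : Polynomial R) ^ GenHessAux.cnt S (γ' ⟨c, hcV'⟩ \ S)) := by
          rw [Finset.mul_sum, Finset.mul_sum]
          refine Finset.sum_congr rfl fun S _ => ?_
          rw [pow_add]
          ring
      _ = qFact R (c - a) *
          (Polynomial.C (∏ v : {x // x ∈ verts n (I.erase b)}, ∏ x ∈ γ' v, MvPolynomial.X x)
            * Polynomial.X ^ asc n (I.erase b) h γ') := by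
          rw [hqb]
          ring
  rw [Finset.sum_congr rfl hinner, csf, ← Finset.mul_sum]
end

section
/- Let h ∈ H_{I,n} with I∪{n} = {i_1 < ⋯ < i_{r+1} = n} and i_0 = 0, and define the ordinary Hessenberg function h̃ ∈ H_n by h̃(i) = h(i_k) for i_{k−1} < i ≤ i_k (1 ≤ k ≤ r+1). Then for every N ≥ 1, csf_q^N(h̃) = csf_q^N(h) · Π_{k=1}^{r+1} [i_k − i_{k−1}]_q!. (This is eq. (80d) of the paper, the chromatic-quasisymmetric form of Corollary 31, proved by iterating Lemma 80.) -/
/-!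
Adjoin the missing elements of `{1, …, n-1}` to `I` one at a time, always the largest missing
`j`, so that `j + 1` is already a vertex, and give `j` the value `h (j + 1)`. This splits the
vertex `j + 1`, of weight `m`, into `j` of weight `m - 1` and `j + 1` of weight `1`, and
multiplies `csf` by `[m]_q`: a proper colouring of the finer graph is a proper colouring `γ` of
the coarser one together with the colour `c ∈ γ (j + 1)` that stays at `j + 1`, and the only new
ascents are the pairs `b < c` with `b ∈ γ (j + 1)`, so summing over `c` gives
`1 + q + ⋯ + q^{m-1}`.
As `[m]_q [m-1]_q! = [m]_q!`, these factors assemble into the `q`-factorials of the weights.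
Once `I = {1, …, n-1}`, all weights are at most `1` and `h` has the same edges as `h̃`.
-/

namespace GenHess

open Finset Polynomial
open scoped Classical

noncomputable section

section QNumbers

variable (R : Type) [CommRing R]

lemma qNum_succ (m : ℕ) : qNum R (m + 1) = qNum R m + X ^ m :=
  sum_range_succ _ _

lemma qFact_eq_one_of_le_one {m : ℕ} (hm : m ≤ 1) : qFact R m = 1 := by
  interval_cases m <;> simp [qFact, qNum]

lemma sum_X_pow_card_filter_lt {α : Type*} [LinearOrder α] (S : Finset α) :
    ∑ c ∈ S, (X : R[X]) ^ #{b ∈ S | b < c} = qNum R #S := by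
  induction S using Finset.induction_on_max with
  | empty => simp [qNum]
  | insert a s ha ih =>
    have has : a ∉ s := fun h => lt_irrefl a (ha a h)
    have below_a : {b ∈ insert a s | b < a} = s := by
      rw [filter_insert, if_neg (lt_irrefl a)]
      exact filter_true_of_mem ha
    have below_c : ∀ c ∈ s, {b ∈ insert a s | b < c} = {b ∈ s | b < c} := fun c hc => by
      rw [filter_insert, if_neg (asymm (ha c hc))]
    rw [sum_insert has, below_a, sum_congr rfl fun c hc => by rw [below_c c hc], ih,
      card_insert_of_notMem has, qNum_succ, add_comm]

end QNumbers

section Weights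

variable {n j : ℕ} {I : Finset ℕ}

lemma verts_insert : verts n (insert j I) = insert j (verts n I) :=
  insert_comm _ _ _

lemma mem_verts_insert {v : ℕ} : v ∈ verts n (insert j I) ↔ v = j ∨ v ∈ verts n I := by
  rw [verts_insert, mem_insert]

lemma le_of_mem_verts_Icc {v : ℕ} (hv : v ∈ verts n (Icc 1 (n - 1))) : v ≤ n := by
  rcases mem_insert.mp hv with rfl | hv
  · exact le_rfl
  · exact (mem_Icc.mp hv).2.trans (Nat.sub_le n 1)

lemma wt_le_sub {u v : ℕ} (hu : u ∈ verts n I) (huv : u < v) : wt n I v ≤ v - u := by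
  have : u ≤ {w ∈ verts n I | w < v}.sup id := le_sup (f := id) (mem_filter.mpr ⟨hu, huv⟩)
  unfold wt
  omega

lemma wt_Icc_le_one {v : ℕ} (hv : v ≤ n) : wt n (Icc 1 (n - 1)) v ≤ 1 := by
  rcases Nat.lt_or_ge v 2 with hv2 | hv2
  · exact (Nat.sub_le _ _).trans (by omega)
  · have hmem : v - 1 ∈ verts n (Icc 1 (n - 1)) :=
      mem_insert_of_mem (mem_Icc.mpr ⟨by omega, by omega⟩)
    exact (wt_le_sub hmem (by omega)).trans (by omega)

lemma wt_insert_succ : wt n (insert j I) (j + 1) = 1 := by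
  have hle : {u ∈ verts n I | u < j + 1}.sup id ≤ j :=
    Finset.sup_le fun u hu => Nat.lt_succ_iff.mp (mem_filter.mp hu).2
  rw [wt, verts_insert, filter_insert, if_pos (Nat.lt_succ_self j), sup_insert, id,
    max_eq_left hle]
  omega

lemma wt_succ_eq_wt_insert_add_one (hj : j ∉ verts n I) :
    wt n I (j + 1) = wt n (insert j I) j + 1 := by
  have hle : {u ∈ verts n I | u < j + 1}.sup id ≤ j :=
    Finset.sup_le fun u hu => Nat.lt_succ_iff.mp (mem_filter.mp hu).2
  have hfilter : {u ∈ verts n I | u < j} = {u ∈ verts n I | u < j + 1} :=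
    filter_congr fun u hu => by have := ne_of_mem_of_not_mem hu hj; omega
  rw [wt, wt, verts_insert, filter_insert, if_neg (lt_irrefl j), hfilter]
  omega

lemma wt_insert_of_ne (hj : j ∉ verts n I) (hj1 : j + 1 ∈ verts n I) {v : ℕ}
    (hv : v ∈ verts n I) (hvj : v ≠ j + 1) :
    wt n (insert j I) v = wt n I v := by
  rw [wt, wt, verts_insert, filter_insert]
  split_ifs with hjv
  · have : j + 1 ≤ {u ∈ verts n I | u < v}.sup id := by
      have := ne_of_mem_of_not_mem hv hj
      exact le_sup (f := id) (mem_filter.mpr ⟨hj1, by omega⟩)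
    rw [sup_insert, id, max_eq_right (by omega)]
  · rfl

end Weights

section Colorings

variable {N n : ℕ} {I : Finset ℕ} {h : ℕ → ℕ}

def colorMonomial (V : Finset ℕ) (g : ℕ → Finset (Fin N)) : MvPolynomial (Fin N) ℤ :=
  ∏ v ∈ V, ∏ a ∈ g v, MvPolynomial.X a

def ascPairs (A B : Finset (Fin N)) : ℕ := #{ab ∈ A ×ˢ B | ab.1 < ab.2}

def edgeAsc (h : ℕ → ℕ) (g : ℕ → Finset (Fin N)) (v u : ℕ) : ℕ :=
  if v < u ∧ u ≤ h v then ascPairs (g v) (g u) else 0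

def ascOn (V : Finset ℕ) (h : ℕ → ℕ) (g : ℕ → Finset (Fin N)) : ℕ :=
  ∑ v ∈ V, ∑ u ∈ V, edgeAsc h g v u

def IsProperOn (n : ℕ) (I : Finset ℕ) (h : ℕ → ℕ) (g : ℕ → Finset (Fin N)) : Prop :=
  (∀ v ∈ verts n I, #(g v) = wt n I v) ∧
  ∀ v ∈ verts n I, ∀ u ∈ verts n I, v < u → u ≤ h v → Disjoint (g v) (g u)

/-- Colourings are recorded as families indexed by all of `ℕ`, empty off the vertex set, so that
colourings of different vertex sets `verts n I` live in one type. -/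
def extendColoring (γ : {x // x ∈ verts n I} → Finset (Fin N)) : ℕ → Finset (Fin N) :=
  fun v => if hv : v ∈ verts n I then γ ⟨v, hv⟩ else ∅

def properColorings (n : ℕ) (I : Finset ℕ) (h : ℕ → ℕ) (N : ℕ) :
    Finset (ℕ → Finset (Fin N)) :=
  (univ.filter (IsProper n I h)).image extendColoring

lemma extendColoring_val (γ : {x // x ∈ verts n I} → Finset (Fin N))
    (v : {x // x ∈ verts n I}) :
    extendColoring γ v = γ v :=
  dif_pos v.2

lemma extendColoring_injective :
    Function.Injective (extendColoring : ({x // x ∈ verts n I} → Finset (Fin N)) → _) :=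
  fun γ₁ γ₂ heq => funext fun v => by
    simpa only [extendColoring_val] using congrFun heq v

lemma isProper_iff_isProperOn_extendColoring (γ : {x // x ∈ verts n I} → Finset (Fin N)) :
    IsProper n I h γ ↔ IsProperOn n I h (extendColoring γ) := by
  simp only [IsProper, IsProperOn, Subtype.forall]
  simp +contextual only [extendColoring, dite_true]

lemma mem_properColorings {g : ℕ → Finset (Fin N)} :
    g ∈ properColorings n I h N ↔ IsProperOn n I h g ∧ ∀ v ∉ verts n I, g v = ∅ := by
  simp only [properColorings, mem_image, mem_filter, mem_univ, true_and]
  constructor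
  · rintro ⟨γ, hγ, rfl⟩
    exact ⟨(isProper_iff_isProperOn_extendColoring γ).mp hγ, fun v hv => dif_neg hv⟩
  · rintro ⟨hg, hsupp⟩
    have hext : extendColoring (fun v : {x // x ∈ verts n I} => g v) = g := funext fun v => by
      by_cases hv : v ∈ verts n I
      · exact dif_pos hv
      · exact (dif_neg hv).trans (hsupp v hv).symm
    exact ⟨_, (isProper_iff_isProperOn_extendColoring _).mpr (by rwa [hext]), hext⟩

lemma csf_eq_sum_properColorings :
    csf n I h N = ∑ g ∈ properColorings n I h N,
      C (colorMonomial (verts n I) g) * X ^ ascOn (verts n I) h g := by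
  rw [properColorings, sum_image fun γ₁ _ γ₂ _ heq => extendColoring_injective heq, csf]
  refine sum_congr rfl fun γ _ => ?_
  rw [colorMonomial, ascOn, ← prod_coe_sort (verts n I), ← sum_coe_sort (verts n I), asc]
  simp only [extendColoring_val, ← sum_coe_sort (verts n I), edgeAsc, ascPairs]

lemma csf_congr {h₁ h₂ : ℕ → ℕ}
    (hh : ∀ v ∈ verts n I, ∀ u ∈ verts n I, v < u → (u ≤ h₁ v ↔ u ≤ h₂ v)) :
    csf n I h₁ N = csf n I h₂ N := by
  have hproper : ∀ g : ℕ → Finset (Fin N), IsProperOn n I h₁ g ↔ IsProperOn n I h₂ g :=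
    fun g => and_congr_right' <| forall₂_congr fun v hv => forall₂_congr fun u hu =>
      forall_congr' fun hvu => imp_congr_left (hh v hv u hu hvu)
  have hasc : ∀ g : ℕ → Finset (Fin N), ascOn (verts n I) h₁ g = ascOn (verts n I) h₂ g :=
    fun g => sum_congr rfl fun v hv => sum_congr rfl fun u hu => by
      by_cases hvu : v < u
      · simp only [edgeAsc, hvu, true_and, hh v hv u hu hvu]
      · simp only [edgeAsc, hvu, false_and, if_false]
  have hP : properColorings n I h₁ N = properColorings n I h₂ N := by
    ext g
    simp only [mem_properColorings, hproper]
  simp only [csf_eq_sum_properColorings, hP, hasc]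

end Colorings

section Refinement

variable {N n j : ℕ} {I : Finset ℕ} {h : ℕ → ℕ} {g : ℕ → Finset (Fin N)} {c : Fin N}

def splitHess (j : ℕ) (h : ℕ → ℕ) : ℕ → ℕ := Function.update h j (h (j + 1))

@[simp] lemma splitHess_self : splitHess j h j = h (j + 1) :=
  Function.update_self _ _ _

lemma splitHess_of_ne {v : ℕ} (hvj : v ≠ j) : splitHess j h v = h v :=
  Function.update_of_ne hvj _ _

lemma IsGenHess.subset_Icc (hgen : IsGenHess n I h) : I ⊆ Icc 1 (n - 1) :=
  fun i hi => mem_Icc.mpr (hgen.1 i hi)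

lemma IsGenHess.insert (hgen : IsGenHess n I h) (hjn : j ∈ Icc 1 (n - 1))
    (hj : j ∉ verts n I) (hj1 : j + 1 ∈ verts n I) :
    IsGenHess n (insert j I) (splitHess j h) := by
  obtain ⟨hI, hmaps, hle, hmono⟩ := hgen
  have hne : ∀ v ∈ verts n I, v ≠ j := fun v hv => ne_of_mem_of_not_mem hv hj
  have hsplit : ∀ v ∈ verts n I, splitHess j h v = h v := fun v hv => splitHess_of_ne (hne v hv)
  refine ⟨fun i hi => ?_, fun i hi => ?_, fun i hi => ?_, fun i hi k hk hik => ?_⟩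
  · rcases mem_insert.mp hi with rfl | hi
    · exact mem_Icc.mp hjn
    · exact hI i hi
  all_goals rcases mem_verts_insert.mp hi with rfl | hiV
  · simpa using mem_verts_insert.mpr (.inr (hmaps _ hj1))
  · simpa [hsplit i hiV] using mem_verts_insert.mpr (.inr (hmaps _ hiV))
  · simpa using (hle _ hj1).trans' (Nat.le_succ i)
  · simpa [hsplit i hiV] using hle i hiV
  all_goals rcases mem_verts_insert.mp hk with rfl | hkV
  · exact le_rfl
  · rw [splitHess_self, hsplit k hkV]
    exact hmono _ hj1 _ hkV (by have := hne k hkV; omega)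
  · rw [splitHess_self, hsplit i hiV]
    exact hmono _ hiV _ hj1 (by omega)
  · rw [hsplit i hiV, hsplit k hkV]
    exact hmono _ hiV _ hkV hik

def splitColoring (j : ℕ) (g : ℕ → Finset (Fin N)) (c : Fin N) : ℕ → Finset (Fin N) :=
  Function.update (Function.update g j ((g (j + 1)).erase c)) (j + 1) {c}

def mergeColoring (j : ℕ) (g : ℕ → Finset (Fin N)) : ℕ → Finset (Fin N) :=
  Function.update (Function.update g (j + 1) (g j ∪ g (j + 1))) j ∅

@[simp] lemma splitColoring_self : splitColoring j g c j = (g (j + 1)).erase c := by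
  simp [splitColoring]

@[simp] lemma splitColoring_succ : splitColoring j g c (j + 1) = {c} := by
  simp [splitColoring]

lemma splitColoring_of_ne {v : ℕ} (hvj : v ≠ j) (hvj1 : v ≠ j + 1) :
    splitColoring j g c v = g v := by
  simp [splitColoring, hvj, hvj1]

@[simp] lemma mergeColoring_self : mergeColoring j g j = ∅ := by
  simp [mergeColoring]

@[simp] lemma mergeColoring_succ : mergeColoring j g (j + 1) = g j ∪ g (j + 1) := by
  simp [mergeColoring]

lemma mergeColoring_of_ne {v : ℕ} (hvj : v ≠ j) (hvj1 : v ≠ j + 1) :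
    mergeColoring j g v = g v := by
  simp [mergeColoring, hvj, hvj1]

lemma splitColoring_subset (hc : c ∈ g (j + 1)) {v : ℕ} (hvj : v ≠ j) :
    splitColoring j g c v ⊆ g v := by
  by_cases hvj1 : v = j + 1
  · subst hvj1
    simpa using hc
  · rw [splitColoring_of_ne hvj hvj1]

lemma mergeColoring_splitColoring (hc : c ∈ g (j + 1)) (hgj : g j = ∅) :
    mergeColoring j (splitColoring j g c) = g := by
  funext v
  by_cases hvj : v = j
  · subst hvj
    simp [hgj]
  by_cases hvj1 : v = j + 1
  · subst hvj1
    simp [erase_union_eq c _ hc]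
  · rw [mergeColoring_of_ne hvj hvj1, splitColoring_of_ne hvj hvj1]

lemma splitColoring_mergeColoring (hdisj : Disjoint (g j) (g (j + 1))) (hc : g (j + 1) = {c}) :
    splitColoring j (mergeColoring j g) c = g := by
  funext v
  by_cases hvj : v = j
  · subst hvj
    rw [hc] at hdisj
    simp [hc, erase_eq_of_notMem (disjoint_singleton_right.mp hdisj)]
  by_cases hvj1 : v = j + 1
  · subst hvj1
    simp [hc]
  · rw [splitColoring_of_ne hvj hvj1, mergeColoring_of_ne hvj hvj1]

lemma disjoint_of_isProperOn_insert (hgen : IsGenHess n I h) (hj1 : j + 1 ∈ verts n I)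
    (hg : IsProperOn n (insert j I) (splitHess j h) g) :
    Disjoint (g j) (g (j + 1)) :=
  hg.2 j (mem_verts_insert.mpr (.inl rfl)) (j + 1) (mem_verts_insert.mpr (.inr hj1))
    (Nat.lt_succ_self j) (by simpa using hgen.2.2.1 _ hj1)

lemma isProperOn_splitColoring (hgen : IsGenHess n I h) (hj : j ∉ verts n I)
    (hj1 : j + 1 ∈ verts n I) (hg : IsProperOn n I h g) (hc : c ∈ g (j + 1)) :
    IsProperOn n (insert j I) (splitHess j h) (splitColoring j g c) := by
  have hne : ∀ v ∈ verts n I, v ≠ j := fun v hv => ne_of_mem_of_not_mem hv hj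
  obtain ⟨hcard, hdisj⟩ := hg
  refine ⟨fun v hv => ?_, fun v hv u hu hvu huv => ?_⟩
  · rcases mem_verts_insert.mp hv with hvj | hv
    · subst v
      rw [splitColoring_self, card_erase_of_mem hc, hcard _ hj1, wt_succ_eq_wt_insert_add_one hj]
      rfl
    by_cases hvj1 : v = j + 1
    · subst hvj1
      rw [splitColoring_succ, card_singleton, wt_insert_succ]
    · rw [splitColoring_of_ne (hne v hv) hvj1, wt_insert_of_ne hj hj1 hv hvj1]
      exact hcard v hv
  · rcases mem_verts_insert.mp hv with hvj | hvV <;>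
      rcases mem_verts_insert.mp hu with huj | huV
    · omega
    · subst v
      rw [splitHess_self] at huv
      by_cases huj1 : u = j + 1
      · subst u
        simp
      · rw [splitColoring_self, splitColoring_of_ne (hne u huV) huj1]
        exact (hdisj _ hj1 _ huV (by omega) huv).mono_left (erase_subset _ _)
    · subst u
      rw [splitHess_of_ne (hne v hvV)] at huv
      have := hne _ (hgen.2.1 v hvV)
      rw [splitColoring_of_ne (hne v hvV) (by omega), splitColoring_self]
      exact (hdisj _ hvV _ hj1 (by omega) (by omega)).mono_right (erase_subset _ _)
    · rw [splitHess_of_ne (hne v hvV)] at huv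
      exact (hdisj _ hvV _ huV hvu huv).mono (splitColoring_subset hc (hne v hvV))
        (splitColoring_subset hc (hne u huV))

lemma isProperOn_mergeColoring (hgen : IsGenHess n I h) (hj : j ∉ verts n I)
    (hj1 : j + 1 ∈ verts n I) (hg : IsProperOn n (insert j I) (splitHess j h) g) :
    IsProperOn n I h (mergeColoring j g) := by
  have hne : ∀ v ∈ verts n I, v ≠ j := fun v hv => ne_of_mem_of_not_mem hv hj
  have hjj1 := disjoint_of_isProperOn_insert hgen hj1 hg
  obtain ⟨hcard, hdisj⟩ := hg
  have hsub : ∀ v ∈ verts n I, v ∈ verts n (insert j I) := fun v hv =>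
    mem_verts_insert.mpr (.inr hv)
  have hjV : j ∈ verts n (insert j I) := mem_verts_insert.mpr (.inl rfl)
  have hdisj' : ∀ v ∈ verts n I, ∀ u ∈ verts n (insert j I), v < u → u ≤ h v →
      Disjoint (g v) (g u) := fun v hv u hu hvu huv =>
    hdisj v (hsub v hv) u hu hvu (by rwa [splitHess_of_ne (hne v hv)])
  refine ⟨fun v hv => ?_, fun v hv u hu hvu huv => ?_⟩
  · by_cases hvj1 : v = j + 1
    · subst hvj1
      rw [mergeColoring_succ, card_union_of_disjoint hjj1, hcard j hjV, hcard _ (hsub _ hj1),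
        wt_insert_succ, wt_succ_eq_wt_insert_add_one hj]
    · rw [mergeColoring_of_ne (hne v hv) hvj1, hcard v (hsub v hv),
        wt_insert_of_ne hj hj1 hv hvj1]
  by_cases hvj1 : v = j + 1
  · subst hvj1
    rw [mergeColoring_succ, mergeColoring_of_ne (hne u hu) (by omega)]
    exact disjoint_union_left.mpr ⟨hdisj j hjV u (hsub u hu) (by omega) (by simpa using huv),
      hdisj' _ hv u (hsub u hu) hvu huv⟩
  rw [mergeColoring_of_ne (hne v hv) hvj1]
  by_cases huj1 : u = j + 1
  · subst huj1
    have := hne v hv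
    rw [mergeColoring_succ]
    exact disjoint_union_right.mpr ⟨hdisj' v hv j hjV (by omega) (by omega),
      hdisj' v hv _ (hsub _ hu) hvu huv⟩
  · rw [mergeColoring_of_ne (hne u hu) huj1]
    exact hdisj' v hv u (hsub u hu) hvu huv

lemma sum_properColorings_insert {M : Type*} [AddCommMonoid M] (f : (ℕ → Finset (Fin N)) → M)
    (hgen : IsGenHess n I h) (hj : j ∉ verts n I) (hj1 : j + 1 ∈ verts n I) :
    ∑ g ∈ properColorings n (insert j I) (splitHess j h) N, f g =
      ∑ g ∈ properColorings n I h N, ∑ c ∈ g (j + 1), f (splitColoring j g c) := by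
  rw [sum_sigma']
  symm
  refine sum_bij (fun x _ => splitColoring j x.1 x.2) ?_ ?_ ?_ fun _ _ => rfl
  · rintro ⟨g, c⟩ hx
    obtain ⟨hg, hc⟩ := mem_sigma.mp hx
    obtain ⟨hg, hsupp⟩ := mem_properColorings.mp hg
    refine mem_properColorings.mpr ⟨isProperOn_splitColoring hgen hj hj1 hg hc, fun v hv => ?_⟩
    rw [mem_verts_insert, not_or] at hv
    rw [splitColoring_of_ne hv.1 (ne_of_mem_of_not_mem hj1 hv.2).symm]
    exact hsupp v hv.2
  · rintro ⟨g₁, c₁⟩ hx₁ ⟨g₂, c₂⟩ hx₂ heq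
    obtain ⟨hg₁, hc₁⟩ := mem_sigma.mp hx₁
    obtain ⟨hg₂, hc₂⟩ := mem_sigma.mp hx₂
    dsimp only at hg₁ hc₁ hg₂ hc₂ heq
    have hc : c₁ = c₂ := by simpa using congrFun heq (j + 1)
    have hg : g₁ = g₂ := by
      rw [← mergeColoring_splitColoring hc₁ ((mem_properColorings.mp hg₁).2 j hj),
        ← mergeColoring_splitColoring hc₂ ((mem_properColorings.mp hg₂).2 j hj)]
      exact congrArg _ heq
    subst hc hg
    rfl
  · intro g hg
    obtain ⟨hg, hsupp⟩ := mem_properColorings.mp hg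
    have hjj1 := disjoint_of_isProperOn_insert hgen hj1 hg
    obtain ⟨c, hc⟩ := card_eq_one.mp
      ((hg.1 (j + 1) (mem_verts_insert.mpr (.inr hj1))).trans wt_insert_succ)
    refine ⟨⟨mergeColoring j g, c⟩, mem_sigma.mpr ⟨mem_properColorings.mpr
      ⟨isProperOn_mergeColoring hgen hj hj1 hg, fun v hv => ?_⟩, by simp [hc]⟩,
      splitColoring_mergeColoring hjj1 hc⟩
    by_cases hvj : v = j
    · simp [hvj]
    · show mergeColoring j g v = ∅
      rw [mergeColoring_of_ne hvj (ne_of_mem_of_not_mem hj1 hv).symm]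
      exact hsupp v (mt mem_verts_insert.mp (by tauto))

end Refinement

section Statistics

variable {N n j : ℕ} {I : Finset ℕ} {h : ℕ → ℕ} {g : ℕ → Finset (Fin N)} {c : Fin N}

lemma colorMonomial_splitColoring {V : Finset ℕ} (hj : j ∉ V) (hj1 : j + 1 ∈ V)
    (hc : c ∈ g (j + 1)) :
    colorMonomial (insert j V) (splitColoring j g c) = colorMonomial V g := by
  have hrest : ∏ v ∈ V.erase (j + 1), ∏ a ∈ splitColoring j g c v, MvPolynomial.X a =
      ∏ v ∈ V.erase (j + 1), ∏ a ∈ g v, (MvPolynomial.X a : MvPolynomial (Fin N) ℤ) :=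
    prod_congr rfl fun v hv => by
      rw [splitColoring_of_ne (ne_of_mem_of_not_mem (mem_of_mem_erase hv) hj) (ne_of_mem_erase hv)]
  rw [colorMonomial, colorMonomial, prod_insert hj, ← mul_prod_erase V _ hj1,
    ← mul_prod_erase V _ hj1, hrest, splitColoring_self, splitColoring_succ, prod_singleton,
    ← prod_erase_mul _ _ hc]
  ring

lemma ascPairs_union_left {A A' : Finset (Fin N)} (hA : Disjoint A A') (B : Finset (Fin N)) :
    ascPairs (A ∪ A') B = ascPairs A B + ascPairs A' B := by
  rw [ascPairs, union_product, filter_union,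
    card_union_of_disjoint (disjoint_filter_filter (disjoint_product.mpr (.inl hA)))]
  rfl

lemma ascPairs_union_right (A : Finset (Fin N)) {B B' : Finset (Fin N)} (hB : Disjoint B B') :
    ascPairs A (B ∪ B') = ascPairs A B + ascPairs A B' := by
  rw [ascPairs, product_union, filter_union,
    card_union_of_disjoint (disjoint_filter_filter (disjoint_product.mpr (.inr hB)))]
  rfl

lemma ascPairs_singleton_right (A : Finset (Fin N)) (c : Fin N) :
    ascPairs A {c} = #{b ∈ A | b < c} := by
  rw [ascPairs, product_singleton, filter_map, card_map]
  rfl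

lemma edgeAsc_of_le {v u : ℕ} (huv : u ≤ v) : edgeAsc h g v u = 0 :=
  if_neg (by omega)

lemma edgeAsc_splitColoring_self_succ (hj1 : j + 1 ≤ h (j + 1)) :
    edgeAsc (splitHess j h) (splitColoring j g c) j (j + 1) = #{b ∈ g (j + 1) | b < c} := by
  rw [edgeAsc, if_pos ⟨Nat.lt_succ_self j, by rwa [splitHess_self]⟩, splitColoring_self,
    splitColoring_succ, ascPairs_singleton_right, filter_erase, erase_eq_of_notMem (by simp)]

lemma edgeAsc_splitColoring_of_ne {v u : ℕ} (hvj : v ≠ j) (hvj1 : v ≠ j + 1) (huj : u ≠ j)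
    (huj1 : u ≠ j + 1) :
    edgeAsc (splitHess j h) (splitColoring j g c) v u = edgeAsc h g v u := by
  rw [edgeAsc, edgeAsc, splitHess_of_ne hvj, splitColoring_of_ne hvj hvj1,
    splitColoring_of_ne huj huj1]

/-- The colour sets of the split vertices `j` and `j + 1` partition `g (j + 1)`, and their
neighbours among the other vertices are those of `j + 1` before the split. -/
lemma edgeAsc_splitColoring_add_left (hc : c ∈ g (j + 1)) {u : ℕ} (huj : u ≠ j)
    (huj1 : u ≠ j + 1) :
    edgeAsc (splitHess j h) (splitColoring j g c) j u +
        edgeAsc (splitHess j h) (splitColoring j g c) (j + 1) u = edgeAsc h g (j + 1) u := by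
  simp only [edgeAsc, splitHess_self, splitHess_of_ne (Nat.succ_ne_self j), splitColoring_self,
    splitColoring_succ, splitColoring_of_ne huj huj1]
  by_cases hcond : j + 1 < u ∧ u ≤ h (j + 1)
  · rw [if_pos ⟨by omega, hcond.2⟩, if_pos hcond, if_pos hcond,
      ← ascPairs_union_left (disjoint_singleton_right.mpr (notMem_erase c _)),
      erase_union_eq c _ hc]
  · rw [if_neg (by omega), if_neg hcond, if_neg hcond]

lemma edgeAsc_splitColoring_add_right (hc : c ∈ g (j + 1)) {v : ℕ} (hvj : v ≠ j)
    (hvj1 : v ≠ j + 1) (hhv : h v ≠ j) :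
    edgeAsc (splitHess j h) (splitColoring j g c) v j +
        edgeAsc (splitHess j h) (splitColoring j g c) v (j + 1) = edgeAsc h g v (j + 1) := by
  simp only [edgeAsc, splitHess_of_ne hvj, splitColoring_self, splitColoring_succ,
    splitColoring_of_ne hvj hvj1]
  by_cases hcond : v < j + 1 ∧ j + 1 ≤ h v
  · rw [if_pos ⟨by omega, by omega⟩, if_pos hcond, if_pos hcond,
      ← ascPairs_union_right _ (disjoint_singleton_right.mpr (notMem_erase c _)),
      erase_union_eq c _ hc]
  · rw [if_neg (by omega), if_neg hcond, if_neg hcond]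

lemma sum_sum_insert {α M : Type*} [DecidableEq α] [AddCommMonoid M] {s : Finset α} {a : α}
    (ha : a ∉ s) (F : α → α → M) :
    ∑ v ∈ insert a s, ∑ u ∈ insert a s, F v u =
      F a a + ∑ u ∈ s, F a u + ∑ v ∈ s, F v a + ∑ v ∈ s, ∑ u ∈ s, F v u := by
  simp only [sum_insert ha, sum_add_distrib]
  abel

lemma ascOn_splitColoring (hgen : IsGenHess n I h) (hj : j ∉ verts n I)
    (hj1 : j + 1 ∈ verts n I) (hc : c ∈ g (j + 1)) :
    ascOn (verts n (insert j I)) (splitHess j h) (splitColoring j g c) =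
      ascOn (verts n I) h g + #{b ∈ g (j + 1) | b < c} := by
  set E := (verts n I).erase (j + 1)
  have hVE : insert (j + 1) E = verts n I := insert_erase hj1
  have hj1E : j + 1 ∉ E := notMem_erase _ _
  have hjE : j ∉ insert (j + 1) E := hVE ▸ hj
  have hE : ∀ v ∈ E, v ≠ j ∧ v ≠ j + 1 ∧ h v ≠ j := fun v hv =>
    ⟨ne_of_mem_of_not_mem (mem_of_mem_erase hv) hj, ne_of_mem_erase hv,
      ne_of_mem_of_not_mem (hgen.2.1 v (mem_of_mem_erase hv)) hj⟩
  set F' := edgeAsc (splitHess j h) (splitColoring j g c)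
  set F := edgeAsc h g
  have row : ∑ u ∈ E, F' j u + ∑ u ∈ E, F' (j + 1) u = ∑ u ∈ E, F (j + 1) u := by
    rw [← sum_add_distrib]
    exact sum_congr rfl fun u hu => edgeAsc_splitColoring_add_left hc (hE u hu).1 (hE u hu).2.1
  have col : ∑ v ∈ E, F' v j + ∑ v ∈ E, F' v (j + 1) = ∑ v ∈ E, F v (j + 1) := by
    rw [← sum_add_distrib]
    exact sum_congr rfl fun v hv => edgeAsc_splitColoring_add_right hc (hE v hv).1
      (hE v hv).2.1 (hE v hv).2.2
  have mid : ∑ v ∈ E, ∑ u ∈ E, F' v u = ∑ v ∈ E, ∑ u ∈ E, F v u :=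
    sum_congr rfl fun v hv => sum_congr rfl fun u hu =>
      edgeAsc_splitColoring_of_ne (hE v hv).1 (hE v hv).2.1 (hE u hu).1 (hE u hu).2.1
  rw [ascOn, ascOn, verts_insert, ← hVE, sum_sum_insert hjE, sum_sum_insert hj1E,
    sum_sum_insert hj1E, sum_insert hj1E, sum_insert hj1E, edgeAsc_of_le le_rfl,
    edgeAsc_of_le le_rfl, edgeAsc_of_le le_rfl, edgeAsc_of_le (Nat.le_succ j),
    edgeAsc_splitColoring_self_succ (hgen.2.2.1 _ hj1), ← row, ← col, mid]
  ring

end Statistics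

theorem csf_insert {N n j : ℕ} {I : Finset ℕ} {h : ℕ → ℕ} (hgen : IsGenHess n I h)
    (hj : j ∉ verts n I) (hj1 : j + 1 ∈ verts n I) :
    csf n (insert j I) (splitHess j h) N =
      csf n I h N * qNum (MvPolynomial (Fin N) ℤ) (wt n I (j + 1)) := by
  rw [csf_eq_sum_properColorings, csf_eq_sum_properColorings, sum_mul,
    sum_properColorings_insert _ hgen hj hj1]
  refine sum_congr rfl fun g hg => ?_
  obtain ⟨⟨hcard, -⟩, -⟩ := mem_properColorings.mp hg
  calc _ = ∑ c ∈ g (j + 1), C (colorMonomial (verts n I) g) * X ^ ascOn (verts n I) h g *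
        X ^ #{b ∈ g (j + 1) | b < c} := sum_congr rfl fun c hc => by
          rw [ascOn_splitColoring hgen hj hj1 hc, verts_insert,
            colorMonomial_splitColoring hj hj1 hc, pow_add, mul_assoc]
    _ = _ := by rw [← mul_sum, sum_X_pow_card_filter_lt, hcard _ hj1]

lemma qNum_mul_prod_qFact_wt_insert (R : Type) [CommRing R] {n j : ℕ} {I : Finset ℕ}
    (hj : j ∉ verts n I) (hj1 : j + 1 ∈ verts n I) :
    qNum R (wt n I (j + 1)) * ∏ v ∈ verts n (insert j I), qFact R (wt n (insert j I) v) =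
      ∏ v ∈ verts n I, qFact R (wt n I v) := by
  have hrest : ∏ v ∈ (verts n I).erase (j + 1), qFact R (wt n (insert j I) v) =
      ∏ v ∈ (verts n I).erase (j + 1), qFact R (wt n I v) :=
    prod_congr rfl fun v hv => by
      rw [wt_insert_of_ne hj hj1 (mem_of_mem_erase hv) (ne_of_mem_erase hv)]
  rw [verts_insert, prod_insert hj, ← mul_prod_erase _ _ hj1,
    ← mul_prod_erase (verts n I) _ hj1, hrest, wt_insert_succ, qFact_eq_one_of_le_one R le_rfl,
    wt_succ_eq_wt_insert_add_one hj, qFact]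
  ring

def ExtendsBlockwise (htil : ℕ → ℕ) (n : ℕ) (I : Finset ℕ) (h : ℕ → ℕ) : Prop :=
  ∀ i, 1 ≤ i → i ≤ n → ∀ v ∈ verts n I, i ≤ v →
    (∀ u ∈ verts n I, i ≤ u → v ≤ u) → htil i = h v

lemma ExtendsBlockwise.insert {htil h : ℕ → ℕ} {n j : ℕ} {I : Finset ℕ}
    (hext : ExtendsBlockwise htil n I h) (hj : j ∉ verts n I) (hj1 : j + 1 ∈ verts n I) :
    ExtendsBlockwise htil n (insert j I) (splitHess j h) := by
  intro i hi1 hin v hv hiv hmin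
  have hmin' : ∀ u ∈ verts n I, i ≤ u → v ≤ u := fun u hu =>
    hmin u (mem_verts_insert.mpr (.inr hu))
  rcases mem_verts_insert.mp hv with hvj | hv
  · subst v
    rw [splitHess_self]
    exact hext i hi1 hin _ hj1 (by omega) fun u hu hiu =>
      (hmin' u hu hiu).lt_of_ne (ne_of_mem_of_not_mem hu hj).symm
  · rw [splitHess_of_ne (ne_of_mem_of_not_mem hv hj)]
    exact hext i hi1 hin v hv hiv hmin'

lemma csf_Icc_eq_of_extendsBlockwise {htil h : ℕ → ℕ} {n N : ℕ}
    (hext : ExtendsBlockwise htil n (Icc 1 (n - 1)) h) :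
    csf n (Icc 1 (n - 1)) htil N = csf n (Icc 1 (n - 1)) h N := by
  refine csf_congr fun v hv u hu hvu => ?_
  have hun := le_of_mem_verts_Icc hu
  have hv1 : 1 ≤ v := by
    rcases mem_insert.mp hv with rfl | hv
    · omega
    · exact (mem_Icc.mp hv).1
  rw [hext v hv1 (by omega) v hv le_rfl fun _ _ hvw => hvw]

lemma prod_qFact_wt_Icc (R : Type) [CommRing R] (n : ℕ) :
    ∏ v ∈ verts n (Icc 1 (n - 1)), qFact R (wt n (Icc 1 (n - 1)) v) = 1 :=
  prod_eq_one fun _ hv => qFact_eq_one_of_le_one R (wt_Icc_le_one (le_of_mem_verts_Icc hv))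

lemma exists_succ_mem_verts {n : ℕ} {I : Finset ℕ} (hne : (Icc 1 (n - 1) \ I).Nonempty) :
    ∃ j ∈ Icc 1 (n - 1) \ I, j ∉ verts n I ∧ j + 1 ∈ verts n I := by
  obtain ⟨j, hjmem, hjmax⟩ := exists_max_image _ id hne
  obtain ⟨hjIcc, hjI⟩ := mem_sdiff.mp hjmem
  have hjb := mem_Icc.mp hjIcc
  refine ⟨j, hjmem, fun hjV => ?_, ?_⟩
  · rcases mem_insert.mp hjV with hjn | hjI'
    · omega
    · exact hjI hjI'
  · by_cases hjn : j + 1 = n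
    · exact hjn ▸ mem_insert_self _ _
    · refine mem_insert_of_mem (not_not.mp fun hj1 => ?_)
      have := hjmax (j + 1) (mem_sdiff.mpr ⟨mem_Icc.mpr ⟨by omega, by omega⟩, hj1⟩)
      simp at this

end

end GenHess

open GenHess
open Finset

theorem csf_flag_bundle_general (n : ℕ) (I : Finset ℕ) (h : ℕ → ℕ) (hgen : IsGenHess n I h)
    (htil : ℕ → ℕ)
    (hhtil : ∀ i, 1 ≤ i → i ≤ n → ∀ v ∈ verts n I, i ≤ v →
      (∀ u ∈ verts n I, i ≤ u → v ≤ u) → htil i = h v)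
    (N : ℕ) :
    csf n (Finset.Icc 1 (n - 1)) htil N =
      csf n I h N * ∏ v ∈ verts n I, qFact (MvPolynomial (Fin N) ℤ) (wt n I v) := by
  obtain ⟨k, hk⟩ : ∃ k, #(Icc 1 (n - 1) \ I) = k := ⟨_, rfl⟩
  induction k generalizing I h with
  | zero =>
    obtain rfl : I = Icc 1 (n - 1) :=
      hgen.subset_Icc.antisymm (sdiff_eq_empty_iff_subset.mp (card_eq_zero.mp hk))
    rw [csf_Icc_eq_of_extendsBlockwise hhtil, prod_qFact_wt_Icc, mul_one]
  | succ k ih =>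
    have hne : (Icc 1 (n - 1) \ I).Nonempty := card_pos.mp (by omega)
    obtain ⟨j, hjmem, hj, hj1⟩ := exists_succ_mem_verts hne
    have hk' : #(Icc 1 (n - 1) \ insert j I) = k := by
      rw [sdiff_insert, card_erase_of_mem hjmem, hk, Nat.add_sub_cancel]
    rw [ih (insert j I) _ (hgen.insert (mem_sdiff.mp hjmem).1 hj hj1)
        (ExtendsBlockwise.insert hhtil hj hj1) hk',
      csf_insert hgen hj hj1, mul_assoc, qNum_mul_prod_qFact_wt_insert _ hj hj1]

/-- Eq. (80d): for the ordinary Hessenberg function `h̃` defined by `h̃ i = h i_k` for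
`i_{k-1} < i ≤ i_k` (i.e. `h̃ i = h v` where `v` is the smallest vertex `≥ i`),
`csf(h̃) = csf(h) ⬝ ∏_k [i_k - i_{k-1}]_q!`. -/
theorem csf_flag_bundle (n : ℕ) (I : Finset ℕ) (h : ℕ → ℕ) (hgen : IsGenHess n I h)
    (htil : ℕ → ℕ)
    (hhtil : ∀ i, 1 ≤ i → i ≤ n → ∀ v ∈ verts n I, i ≤ v →
      (∀ u ∈ verts n I, i ≤ u → v ≤ u) → htil i = h v)
    (N : ℕ) (hN : 1 ≤ N) :
    csf n (Finset.Icc 1 (n - 1)) htil N =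
      csf n I h N * ∏ v ∈ verts n I, qFact (MvPolynomial (Fin N) ℤ) (wt n I v) :=
  csf_flag_bundle_general n I h hgen htil hhtil N
end

section
/- Let h ∈ H_{I,n} and suppose h(i) = i for some i ∈ I. Let I' = {i' ∈ I : i' < i} and h' = h|_{I'∪{i}} ∈ H_{I',i}, and let I'' = {i''−i : i'' ∈ I, i'' > i} and h'' ∈ H_{I'',n−i} be defined by h''(i''−i) = h(i'')−i for i'' ∈ I with i'' > i (and h''(n−i) = n−i). Then for every N ≥ 1, csf_q^N(h) = csf_q^N(h') · csf_q^N(h''), a product of polynomials in ℤ[q][x_1,…,x_N]. (This is the chromatic-quasisymmetric form, via the paper's generalized Shareshian–Wachs theorem, of Proposition 34: the Poincaré polynomial of a reducible generalized Hessenberg variety factors.) -/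
/-!
If `h i = i` then, by monotonicity, no edge of `Γ_h` joins a vertex `≤ i` to a vertex `> i`.
The vertex set therefore splits as the disjoint union of the vertices of `h'` and the
(shifted by `i`) vertices of `h''`, with matching weights, and a coloring of `Γ_h` is the same
as a pair of colorings of `Γ_{h'}` and `Γ_{h''}`: it is proper iff both halves are, and its
ascents and its monomial are the sum and the product of those of the halves.
-/

namespace GenHess

-- `I'`, `I''` and `h''` of the statement.
def lowerPart (I : Finset ℕ) (i : ℕ) : Finset ℕ := I.filter (fun x => x < i)

def upperPart (I : Finset ℕ) (i : ℕ) : Finset ℕ :=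
  (I.filter (fun x => i < x)).image (fun x => x - i)

def upperHess (h : ℕ → ℕ) (i : ℕ) : ℕ → ℕ := fun x => h (x + i) - i

section Split

variable {n i : ℕ} {I : Finset ℕ}

lemma mem_verts_lowerPart (hi : i ∈ I) (hin : i < n) {x : ℕ} :
    x ∈ verts i (lowerPart I i) ↔ x ∈ verts n I ∧ x ≤ i := by
  simp only [verts, lowerPart, Finset.mem_insert, Finset.mem_filter]
  constructor
  · rintro (rfl | ⟨hx, hxi⟩)
    · exact ⟨Or.inr hi, le_rfl⟩
    · exact ⟨Or.inr hx, hxi.le⟩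
  · rintro ⟨rfl | hx, hxi⟩
    · omega
    · rcases hxi.eq_or_lt with rfl | hlt
      exacts [Or.inl rfl, Or.inr ⟨hx, hlt⟩]

lemma mem_verts_upperPart (hin : i < n) {x : ℕ} :
    x ∈ verts (n - i) (upperPart I i) ↔ 0 < x ∧ x + i ∈ verts n I := by
  simp only [verts, upperPart, Finset.mem_insert, Finset.mem_image, Finset.mem_filter]
  constructor
  · rintro (rfl | ⟨y, ⟨hy, hiy⟩, rfl⟩)
    · omega
    · rw [Nat.sub_add_cancel hiy.le]
      exact ⟨by omega, Or.inr hy⟩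
  · rintro ⟨hx, hxn | hxI⟩
    · omega
    · exact Or.inr ⟨x + i, ⟨hxI, by omega⟩, by omega⟩

def vertsSplit (hi : i ∈ I) (hin : i < n) :
    {x // x ∈ verts i (lowerPart I i)} ⊕ {x // x ∈ verts (n - i) (upperPart I i)} ≃
      {x // x ∈ verts n I} where
  toFun := Sum.elim (fun v => ⟨v, ((mem_verts_lowerPart hi hin).mp v.2).1⟩)
    (fun v => ⟨v + i, ((mem_verts_upperPart hin).mp v.2).2⟩)
  invFun v :=
    if hv : v.1 ≤ i then Sum.inl ⟨v, (mem_verts_lowerPart hi hin).mpr ⟨v.2, hv⟩⟩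
    else Sum.inr ⟨v - i, (mem_verts_upperPart hin).mpr
      ⟨by omega, by rw [Nat.sub_add_cancel (by omega)]; exact v.2⟩⟩
  left_inv := by
    rintro (v | v)
    · simp [((mem_verts_lowerPart hi hin).mp v.2).2]
    · have := ((mem_verts_upperPart hin).mp v.2).1
      simp [show ¬ (v : ℕ) + i ≤ i by omega]
  right_inv v := by
    by_cases hv : v.1 ≤ i
    · simp [hv]
    · simp only [hv, dite_false, Sum.elim_inr]
      exact Subtype.ext (by simp only; omega)

@[simp] lemma vertsSplit_inl (hi : i ∈ I) (hin : i < n) (v) :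
    (vertsSplit hi hin (Sum.inl v)).1 = v.1 := rfl

@[simp] lemma vertsSplit_inr (hi : i ∈ I) (hin : i < n) (v) :
    (vertsSplit hi hin (Sum.inr v)).1 = v.1 + i := rfl

lemma wt_lowerPart (hi : i ∈ I) (hin : i < n) (v : {x // x ∈ verts i (lowerPart I i)}) :
    wt n I v = wt i (lowerPart I i) v := by
  have hv := ((mem_verts_lowerPart hi hin).mp v.2).2
  unfold wt
  congr 2
  ext u
  simp only [Finset.mem_filter, mem_verts_lowerPart hi hin]
  constructor
  · exact fun hu => ⟨⟨hu.1, by omega⟩, hu.2⟩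
  · exact fun hu => ⟨hu.1.1, hu.2⟩

lemma wt_upperPart (hi : i ∈ I) (hin : i < n) (v : {x // x ∈ verts (n - i) (upperPart I i)}) :
    wt n I (v + i) = wt (n - i) (upperPart I i) v := by
  -- The largest vertex below `v + i` exceeds the largest vertex of the upper part below `v`
  -- by `i`; the vertex `i` itself accounts for the case where the latter is `sup ∅ = 0`.
  unfold wt
  set S := (verts (n - i) (upperPart I i)).filter (fun u => u < v.1)
  set T := (verts n I).filter (fun u => u < v.1 + i)
  have hv0 : 0 < v.1 := ((mem_verts_upperPart hin).mp v.2).1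
  have hiT : i ≤ T.sup id :=
    Finset.le_sup (f := id) (Finset.mem_filter.mpr ⟨Finset.mem_insert_of_mem hi, by omega⟩)
  have hST : S.sup id + i ≤ T.sup id := by
    suffices S.sup id ≤ T.sup id - i by omega
    refine Finset.sup_le fun w hw => ?_
    obtain ⟨hwV, hwv⟩ := Finset.mem_filter.mp hw
    have : w + i ≤ T.sup id := Finset.le_sup (f := id)
      (Finset.mem_filter.mpr ⟨((mem_verts_upperPart hin).mp hwV).2, by omega⟩)
    simp only [id_eq]; omega
  have hTS : T.sup id ≤ S.sup id + i := by
    refine Finset.sup_le fun u hu => ?_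
    obtain ⟨huV, huv⟩ := Finset.mem_filter.mp hu
    by_cases hui : u ≤ i
    · simp only [id_eq]; omega
    · have : u - i ≤ S.sup id := Finset.le_sup (f := id) (Finset.mem_filter.mpr
        ⟨(mem_verts_upperPart hin).mpr ⟨by omega, by rwa [Nat.sub_add_cancel (by omega)]⟩,
          by omega⟩)
      simp only [id_eq] at this ⊢; omega
  omega

lemma add_le_iff_le_upperHess (hin : i < n) {h : ℕ → ℕ} (v : ℕ)
    (u : {x // x ∈ verts (n - i) (upperPart I i)}) :
    u.1 + i ≤ h (v + i) ↔ u.1 ≤ upperHess h i v := by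
  have := ((mem_verts_upperPart hin).mp u.2).1
  simp only [upperHess]
  omega

end Split

section Cut

variable {n i : ℕ} {I : Finset ℕ} {h : ℕ → ℕ} {N : ℕ}

lemma not_adj_lower_upper (hi : i ∈ I) (hin : i < n)
    (hcut : ∀ v ∈ verts n I, v ≤ i → h v ≤ i)
    (v : {x // x ∈ verts i (lowerPart I i)}) (u : {x // x ∈ verts (n - i) (upperPart I i)}) :
    ¬ u.1 + i ≤ h v.1 := by
  have hv := (mem_verts_lowerPart hi hin).mp v.2
  have := hcut v hv.1 hv.2
  have := ((mem_verts_upperPart hin).mp u.2).1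
  omega

lemma not_adj_upper_lower (hi : i ∈ I) (hin : i < n)
    (v : {x // x ∈ verts (n - i) (upperPart I i)}) (u : {x // x ∈ verts i (lowerPart I i)}) :
    ¬ v.1 + i < u.1 := by
  have := ((mem_verts_lowerPart hi hin).mp u.2).2
  omega

lemma isProper_iff_split (hi : i ∈ I) (hin : i < n)
    (hcut : ∀ v ∈ verts n I, v ≤ i → h v ≤ i)
    (γ : {x // x ∈ verts n I} → Finset (Fin N)) :
    IsProper n I h γ ↔
      IsProper i (lowerPart I i) h (fun v => γ (vertsSplit hi hin (.inl v))) ∧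
        IsProper (n - i) (upperPart I i) (upperHess h i)
          (fun v => γ (vertsSplit hi hin (.inr v))) := by
  simp only [IsProper, ← (vertsSplit hi hin).forall_congr_right, Sum.forall, vertsSplit_inl,
    vertsSplit_inr, wt_lowerPart hi hin, wt_upperPart hi hin, not_adj_lower_upper hi hin hcut,
    not_adj_upper_lower hi hin, add_lt_add_iff_right, add_le_iff_le_upperHess hin,
    IsEmpty.forall_iff, implies_true, true_and, and_true]
  exact and_and_and_comm

lemma asc_split (hi : i ∈ I) (hin : i < n) (hcut : ∀ v ∈ verts n I, v ≤ i → h v ≤ i)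
    (γ : {x // x ∈ verts n I} → Finset (Fin N)) :
    asc n I h γ =
      asc i (lowerPart I i) h (fun v => γ (vertsSplit hi hin (.inl v))) +
        asc (n - i) (upperPart I i) (upperHess h i) (fun v => γ (vertsSplit hi hin (.inr v))) := by
  simp only [asc, ← (vertsSplit hi hin).sum_comp, Fintype.sum_sum_type, vertsSplit_inl,
    vertsSplit_inr, not_adj_lower_upper hi hin hcut, not_adj_upper_lower hi hin,
    add_lt_add_iff_right, add_le_iff_le_upperHess hin, and_false, false_and, if_false,
    Finset.sum_const_zero, add_zero, zero_add]
  -- the two sides differ only in the `Decidable` instances of the `if`s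
  congr!

lemma prod_X_split (hi : i ∈ I) (hin : i < n) (γ : {x // x ∈ verts n I} → Finset (Fin N)) :
    ∏ v, ∏ a ∈ γ v, (MvPolynomial.X a : MvPolynomial (Fin N) ℤ) =
      (∏ v, ∏ a ∈ γ (vertsSplit hi hin (.inl v)), MvPolynomial.X a) *
        ∏ v, ∏ a ∈ γ (vertsSplit hi hin (.inr v)), MvPolynomial.X a := by
  rw [← (vertsSplit hi hin).prod_comp, Fintype.prod_sum_type]

theorem csf_eq_mul_of_cut (hi : i ∈ I) (hin : i < n)
    (hcut : ∀ v ∈ verts n I, v ≤ i → h v ≤ i) :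
    csf n I h N = csf i (lowerPart I i) h N * csf (n - i) (upperPart I i) (upperHess h i) N := by
  let E := ((vertsSplit hi hin).symm.arrowCongr (Equiv.refl _)).trans
    (Equiv.sumArrowEquivProdArrow _ _ (Finset (Fin N)))
  have hE (γ : {x // x ∈ verts n I} → Finset (Fin N)) :
      E γ = (fun v => γ (vertsSplit hi hin (.inl v)), fun v => γ (vertsSplit hi hin (.inr v))) :=
    rfl
  rw [csf, csf, csf, Finset.sum_mul_sum, ← Finset.sum_product']
  refine Finset.sum_equiv E (fun γ => ?_) (fun γ _ => ?_)
  · simp only [hE, Finset.mem_filter, Finset.mem_univ, true_and, Finset.mem_product,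
      isProper_iff_split hi hin hcut]
  · rw [hE, prod_X_split hi hin, asc_split hi hin hcut, map_mul, pow_add]
    ring

end Cut

end GenHess

open GenHess

theorem csf_reducible_mul_general (n : ℕ) (I : Finset ℕ) (h : ℕ → ℕ) (hgen : IsGenHess n I h)
    (i : ℕ) (hi : i ∈ I) (hfix : h i = i)
    (N : ℕ) :
    csf n I h N =
      csf i (I.filter (fun x => x < i)) h N *
        csf (n - i) ((I.filter (fun x => i < x)).image (fun x => x - i))
          (fun x => h (x + i) - i) N := by
  have hin : i < n := by have := hgen.1 i hi; omega
  have hcut : ∀ v ∈ verts n I, v ≤ i → h v ≤ i := fun v hv hvi =>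
    hfix ▸ hgen.2.2.2 v hv i (Finset.mem_insert_of_mem hi) hvi
  exact csf_eq_mul_of_cut hi hin hcut

/-- Proposition 34 (csf form): if `h i = i` for some `i ∈ I` then `csf` factors as a product
over the two generalized Hessenberg functions `h' ∈ H_{I',i}` and `h'' ∈ H_{I'',n-i}`. -/
theorem csf_reducible_mul (n : ℕ) (I : Finset ℕ) (h : ℕ → ℕ) (hgen : IsGenHess n I h)
    (i : ℕ) (hi : i ∈ I) (hfix : h i = i)
    (N : ℕ) (hN : 1 ≤ N) :
    csf n I h N =
      csf i (I.filter (fun x => x < i)) h N *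
        csf (n - i) ((I.filter (fun x => i < x)).image (fun x => x - i))
          (fun x => h (x + i) - i) N :=
  csf_reducible_mul_general n I h hgen i hi hfix N
end

section
/- Let h ∈ H_{r,n} and 1 ≤ j < r. Suppose h(j+1) = h(j)+1, h(j) > j, and no i ∈ [r] satisfies h(i) = j. Define g, g' ∈ H_{[r]∖{j}, n} on ([r]∖{j})∪{n} by: g(i) = h(i) for all i; g'(i) = h(i) for i ≠ j+1 and g'(j+1) = h(j). Then for every N ≥ 1, csf_q^N(h) = csf_q^N(g) + q · csf_q^N(g'). (This is the blowup identity (52) of Theorem 42(2), expressed via chromatic quasisymmetric functions using the paper's generalized Shareshian–Wachs theorem.) -/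
open GenHess



namespace GHAux
open Finset GenHess
open scoped Classical
noncomputable section

variable {N : ℕ}

def cnt (A B : Finset (Fin N)) : ℕ := ((A ×ˢ B).filter fun ab => ab.1 < ab.2).card

lemma disj_prod_right {A B C : Finset (Fin N)} (h : Disjoint B C) :
    Disjoint (A ×ˢ B) (A ×ˢ C) := by
  rw [Finset.disjoint_left]
  rintro ⟨p, q⟩ hp hq
  rw [Finset.mem_product] at hp hq
  exact (Finset.disjoint_left.1 h) hp.2 hq.2

lemma disj_prod_left {A B C : Finset (Fin N)} (h : Disjoint A B) :
    Disjoint (A ×ˢ C) (B ×ˢ C) := by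
  rw [Finset.disjoint_left]
  rintro ⟨p, q⟩ hp hq
  rw [Finset.mem_product] at hp hq
  exact (Finset.disjoint_left.1 h) hp.1 hq.1

lemma cnt_union_right (A B C : Finset (Fin N)) (h : Disjoint B C) :
    cnt A (B ∪ C) = cnt A B + cnt A C := by
  unfold cnt
  rw [Finset.product_union, Finset.filter_union,
    Finset.card_union_of_disjoint (Finset.disjoint_filter_filter (disj_prod_right h))]

lemma cnt_union_left (A B C : Finset (Fin N)) (h : Disjoint A B) :
    cnt (A ∪ B) C = cnt A C + cnt B C := by
  unfold cnt
  rw [Finset.union_product, Finset.filter_union,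
    Finset.card_union_of_disjoint (Finset.disjoint_filter_filter (disj_prod_left h))]

lemma cnt_singleton (s t : Fin N) : cnt {s} {t} = if s < t then 1 else 0 := by
  unfold cnt
  rw [Finset.singleton_product_singleton, Finset.filter_singleton]
  split_ifs <;> simp

def toFun (n : ℕ) (I : Finset ℕ) (γ : {x // x ∈ verts n I} → Finset (Fin N)) :
    ℕ → Finset (Fin N) :=
  fun v => if hv : v ∈ verts n I then γ ⟨v, hv⟩ else ∅

lemma toFun_mem (n : ℕ) (I : Finset ℕ) (γ : {x // x ∈ verts n I} → Finset (Fin N))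
    {v : ℕ} (hv : v ∈ verts n I) : toFun n I γ v = γ ⟨v, hv⟩ := dif_pos hv

lemma toFun_val (n : ℕ) (I : Finset ℕ) (γ : {x // x ∈ verts n I} → Finset (Fin N))
    (v : {x // x ∈ verts n I}) : γ v = toFun n I γ v.val := by
  rw [toFun_mem n I γ v.2]

def ascN (S : Finset ℕ) (f : ℕ → ℕ) (κ : ℕ → Finset (Fin N)) : ℕ :=
  ∑ v ∈ S, ∑ u ∈ S, if v < u ∧ u ≤ f v then cnt (κ v) (κ u) else 0

def monN (S : Finset ℕ) (κ : ℕ → Finset (Fin N)) : MvPolynomial (Fin N) ℤ :=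
  ∏ v ∈ S, ∏ a ∈ κ v, MvPolynomial.X a

lemma asc_eq (n : ℕ) (I : Finset ℕ) (f : ℕ → ℕ)
    (γ : {x // x ∈ verts n I} → Finset (Fin N)) :
    asc n I f γ = ascN (verts n I) f (toFun n I γ) := by
  unfold asc ascN cnt
  calc ∑ v : {x // x ∈ verts n I}, ∑ u : {x // x ∈ verts n I},
        (if v.val < u.val ∧ u.val ≤ f v.val then
          ((γ v ×ˢ γ u).filter fun ab => ab.1 < ab.2).card else 0)
      = ∑ v : {x // x ∈ verts n I},
          ∑ u ∈ verts n I, (if v.val < u ∧ u ≤ f v.val then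
            ((toFun n I γ v.val ×ˢ toFun n I γ u).filter fun ab => ab.1 < ab.2).card else 0) := by
        refine Finset.sum_congr rfl fun v _ => ?_
        rw [← Finset.sum_coe_sort (verts n I)
          (fun u => if v.val < u ∧ u ≤ f v.val then
            ((toFun n I γ v.val ×ˢ toFun n I γ u).filter fun ab => ab.1 < ab.2).card else 0)]
        refine Finset.sum_congr rfl fun u _ => ?_
        rw [← toFun_val, ← toFun_val]
    _ = _ := by
        rw [← Finset.sum_coe_sort (verts n I)
          (fun v => ∑ u ∈ verts n I, (if v < u ∧ u ≤ f v then
            ((toFun n I γ v ×ˢ toFun n I γ u).filter fun ab => ab.1 < ab.2).card else 0))]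

lemma mon_eq (n : ℕ) (I : Finset ℕ) (γ : {x // x ∈ verts n I} → Finset (Fin N)) :
    (∏ v : {x // x ∈ verts n I}, ∏ a ∈ γ v, MvPolynomial.X a) = monN (verts n I) (toFun n I γ) := by
  unfold monN
  calc (∏ v : {x // x ∈ verts n I}, ∏ a ∈ γ v, MvPolynomial.X a)
      = ∏ v : {x // x ∈ verts n I}, ∏ a ∈ toFun n I γ v.val, (MvPolynomial.X a : MvPolynomial (Fin N) ℤ) := by
        refine Finset.prod_congr rfl fun v _ => ?_
        rw [← toFun_val]
    _ = _ := Finset.prod_coe_sort (verts n I)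
      (fun v => ∏ a ∈ toFun n I γ v, MvPolynomial.X a)

lemma csf_eq (n : ℕ) (I : Finset ℕ) (f : ℕ → ℕ) (NN : ℕ) :
    csf n I f NN = ∑ γ ∈ Finset.univ.filter
      (fun γ : {x // x ∈ verts n I} → Finset (Fin NN) => IsProper n I f γ),
      Polynomial.C (monN (verts n I) (toFun n I γ)) *
        Polynomial.X ^ ascN (verts n I) f (toFun n I γ) := by
  unfold csf
  exact Finset.sum_congr rfl fun γ _ => by rw [asc_eq, mon_eq]

lemma isProper_iff (n : ℕ) (I : Finset ℕ) (f : ℕ → ℕ)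
    (γ : {x // x ∈ verts n I} → Finset (Fin N)) :
    IsProper n I f γ ↔
      ((∀ v ∈ verts n I, (toFun n I γ v).card = wt n I v) ∧
       (∀ v ∈ verts n I, ∀ u ∈ verts n I, v < u → u ≤ f v →
          Disjoint (toFun n I γ v) (toFun n I γ u))) := by
  unfold IsProper
  constructor
  · rintro ⟨h1, h2⟩
    refine ⟨fun v hv => ?_, fun v hv u hu h3 h4 => ?_⟩
    · rw [toFun_mem n I γ hv]; exact h1 ⟨v, hv⟩
    · rw [toFun_mem n I γ hv, toFun_mem n I γ hu]; exact h2 ⟨v, hv⟩ ⟨u, hu⟩ h3 h4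
  · rintro ⟨h1, h2⟩
    refine ⟨fun v => ?_, fun v u h3 h4 => ?_⟩
    · rw [toFun_val n I γ v]; exact h1 v.val v.2
    · rw [toFun_val n I γ v, toFun_val n I γ u]; exact h2 v.val v.2 u.val u.2 h3 h4

lemma sup_lt_eq (S : Finset ℕ) (v p : ℕ) (hp : p ∈ S) (h1 : p < v)
    (h2 : ∀ u ∈ S, u < v → u ≤ p) : ((S.filter (fun u => u < v)).sup id) = p :=
  le_antisymm (Finset.sup_le fun u hu =>
      h2 u (Finset.mem_filter.1 hu).1 (Finset.mem_filter.1 hu).2)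
    (Finset.le_sup (f := id) (Finset.mem_filter.2 ⟨hp, h1⟩))

lemma sum2_insert (S : Finset ℕ) (a : ℕ) (ha : a ∉ S) (F : ℕ → ℕ → ℕ) :
    ∑ v ∈ insert a S, ∑ u ∈ insert a S, F v u
      = F a a + (∑ u ∈ S, F a u) + (∑ v ∈ S, F v a) + ∑ v ∈ S, ∑ u ∈ S, F v u := by
  rw [Finset.sum_insert ha, Finset.sum_insert ha]
  have h1 : ∀ v ∈ S, ∑ u ∈ insert a S, F v u = F v a + ∑ u ∈ S, F v u :=
    fun v _ => Finset.sum_insert ha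
  rw [Finset.sum_congr rfl h1, Finset.sum_add_distrib]
  omega

lemma sup_lt_eq_zero (S : Finset ℕ) (v : ℕ) (h : ∀ u ∈ S, ¬ u < v) :
    ((S.filter (fun u => u < v)).sup id) = 0 := by
  rw [Finset.filter_false_of_mem h, Finset.sup_empty]
  rfl

lemma mon_split {N : ℕ} (W : Finset ℕ) (j : ℕ) (μ : ℕ → Finset (Fin N)) (t : Fin N)
    (hjW : j ∉ W) (hj1W : j + 1 ∈ W) (ht : t ∈ μ (j + 1)) :
    monN (insert j W)
      (fun v => if v = j then μ (j+1) \ {t} else if v = j+1 then {t} else μ v)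
      = monN W μ := by
  set κ : ℕ → Finset (Fin N) :=
    fun v => if v = j then μ (j+1) \ {t} else if v = j+1 then {t} else μ v with hκ
  have hκj : κ j = μ (j+1) \ {t} := by simp [hκ]
  have hκj1 : κ (j+1) = {t} := by simp [hκ]
  have hκo : ∀ v, v ≠ j → v ≠ j + 1 → κ v = μ v := by
    intro v h1 h2; simp [hκ, h1, h2]
  unfold monN
  rw [Finset.prod_insert hjW]
  rw [← Finset.mul_prod_erase W _ hj1W, ← Finset.mul_prod_erase W
    (fun v => ∏ a ∈ μ v, MvPolynomial.X a) hj1W]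
  have hrest : ∏ v ∈ W.erase (j+1), (∏ a ∈ κ v, (MvPolynomial.X a : MvPolynomial (Fin N) ℤ))
      = ∏ v ∈ W.erase (j+1), ∏ a ∈ μ v, MvPolynomial.X a := by
    refine Finset.prod_congr rfl fun v hv => ?_
    have hv2 := Finset.ne_of_mem_erase hv
    have hv1 : v ≠ j := fun hc => hjW (hc ▸ (Finset.mem_of_mem_erase hv))
    rw [hκo v hv1 hv2]
  rw [hrest, hκj, hκj1, ← mul_assoc]
  congr 1
  rw [← Finset.prod_sdiff (Finset.singleton_subset_iff.2 ht)
    (f := fun a => (MvPolynomial.X a : MvPolynomial (Fin N) ℤ))]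

end
end GHAux

namespace GHAux
open Finset GenHess
open scoped Classical
noncomputable section

lemma asc_fullrow {N : ℕ} (W : Finset ℕ) (j : ℕ) (f f' : ℕ → ℕ)
    (μ : ℕ → Finset (Fin N))
    (hj1W : j + 1 ∈ W) (hcW : f j + 1 ∈ W)
    (hfj : j + 1 ≤ f j) (hfj1 : f (j + 1) = f j + 1)
    (hf' : ∀ v, v ≠ j + 1 → f' v = f v) (hf'j1 : f' (j + 1) = f j) :
    ascN W f μ = ascN W f' μ + cnt (μ (j + 1)) (μ (f j + 1)) := by
  unfold ascN
  rw [← Finset.add_sum_erase W _ hj1W,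
    ← Finset.add_sum_erase W
      (fun v => ∑ u ∈ W, if v < u ∧ u ≤ f' v then cnt (μ v) (μ u) else 0) hj1W]
  have hrest : ∑ v ∈ W.erase (j+1), ∑ u ∈ W, (if v < u ∧ u ≤ f v then cnt (μ v) (μ u) else 0)
      = ∑ v ∈ W.erase (j+1), ∑ u ∈ W, (if v < u ∧ u ≤ f' v then cnt (μ v) (μ u) else 0) := by
    refine Finset.sum_congr rfl fun v hv => Finset.sum_congr rfl fun u hu => ?_
    rw [hf' v (Finset.ne_of_mem_erase hv)]
  have hrow : ∑ u ∈ W, (if j+1 < u ∧ u ≤ f (j+1) then cnt (μ (j+1)) (μ u) else 0)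
      = (∑ u ∈ W, if j+1 < u ∧ u ≤ f' (j+1) then cnt (μ (j+1)) (μ u) else 0)
        + cnt (μ (j+1)) (μ (f j + 1)) := by
    rw [← Finset.add_sum_erase W _ hcW, ← Finset.add_sum_erase W
      (fun u => if j+1 < u ∧ u ≤ f' (j+1) then cnt (μ (j+1)) (μ u) else 0) hcW]
    have h1 : (if j+1 < f j + 1 ∧ f j + 1 ≤ f (j+1) then cnt (μ (j+1)) (μ (f j+1)) else 0)
        = cnt (μ (j+1)) (μ (f j + 1)) := if_pos ⟨by omega, by omega⟩
    have h2 : (if j+1 < f j + 1 ∧ f j + 1 ≤ f' (j+1) then cnt (μ (j+1)) (μ (f j+1)) else 0)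
        = 0 := if_neg (by rw [hf'j1]; omega)
    have h3 : ∀ u ∈ W.erase (f j + 1),
        (if j+1 < u ∧ u ≤ f (j+1) then cnt (μ (j+1)) (μ u) else 0)
        = (if j+1 < u ∧ u ≤ f' (j+1) then cnt (μ (j+1)) (μ u) else 0) := by
      intro u hu
      have hne := Finset.ne_of_mem_erase hu
      rw [hfj1, hf'j1]
      by_cases hc : j+1 < u ∧ u ≤ f j
      · rw [if_pos ⟨hc.1, by omega⟩, if_pos hc]
      · rw [if_neg (by rintro ⟨ha, hb⟩; exact hc ⟨ha, by omega⟩), if_neg hc]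
    rw [Finset.sum_congr rfl h3, h1, h2]
    omega
  rw [hrest, hrow]
  omega

lemma asc_decomp {N : ℕ} (W : Finset ℕ) (j : ℕ) (f f' : ℕ → ℕ)
    (μ : ℕ → Finset (Fin N)) (t : Fin N)
    (hjW : j ∉ W) (hj1W : j + 1 ∈ W) (hcW : f j + 1 ∈ W)
    (hfj : j + 1 ≤ f j) (hfj1 : f (j + 1) = f j + 1)
    (hf' : ∀ v, v ≠ j + 1 → f' v = f v) (hf'j1 : f' (j + 1) = f j)
    (hnoj : ∀ v ∈ W, v < j → f v ≠ j)
    (ht : t ∈ μ (j + 1)) :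
    ascN (insert j W) f
      (fun v => if v = j then μ (j+1) \ {t} else if v = j+1 then {t} else μ v)
      = ascN W f' μ + cnt (μ (j+1) \ {t}) {t} + cnt {t} (μ (f j + 1)) := by
  set κ : ℕ → Finset (Fin N) :=
    fun v => if v = j then μ (j+1) \ {t} else if v = j+1 then {t} else μ v with hκ
  have hκj : κ j = μ (j+1) \ {t} := by simp [hκ]
  have hκj1 : κ (j+1) = {t} := by simp [hκ]
  have hκo : ∀ v, v ≠ j → v ≠ j + 1 → κ v = μ v := by
    intro v h1 h2; simp [hκ, h1, h2]
  have hcj1 : f j + 1 ≠ j + 1 := by omega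
  have hcW'' : f j + 1 ∈ W.erase (j+1) := Finset.mem_erase.2 ⟨hcj1, hcW⟩
  have hj1W'' : j + 1 ∉ W.erase (j+1) := Finset.notMem_erase _ _
  have hWins : W = insert (j+1) (W.erase (j+1)) := (Finset.insert_erase hj1W).symm
  set W'' := W.erase (j+1) with hW''
  have hmemW'' : ∀ u ∈ W'', u ≠ j ∧ u ≠ j + 1 := by
    intro u hu
    exact ⟨fun hc => hjW (hc ▸ (Finset.mem_of_mem_erase hu)), Finset.ne_of_mem_erase hu⟩
  unfold ascN
  rw [sum2_insert W j hjW]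
  rw [hWins, sum2_insert W'' (j+1) hj1W'']
  rw [← hWins]
  -- diagonal terms vanish
  have hdiag1 : (if j < j ∧ j ≤ f j then cnt (κ j) (κ j) else 0) = 0 := by
    rw [if_neg]; omega
  have hdiag2 : (if j+1 < j+1 ∧ j+1 ≤ f (j+1) then cnt (κ (j+1)) (κ (j+1)) else 0) = 0 := by
    rw [if_neg]; omega
  -- column at j : e(v, j) for v ∈ W''
  -- row at j : e(j, u) over u ∈ W: decompose W
  have hrowj : ∑ u ∈ W, (if j < u ∧ u ≤ f j then cnt (κ j) (κ u) else 0)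
      = cnt (μ (j+1) \ {t}) {t}
        + ∑ u ∈ W'', (if j + 1 < u ∧ u ≤ f j then cnt (μ (j+1) \ {t}) (μ u) else 0) := by
    rw [hWins, Finset.sum_insert hj1W'']
    congr 1
    · rw [if_pos ⟨by omega, hfj⟩, hκj, hκj1]
    · refine Finset.sum_congr rfl fun u hu => ?_
      obtain ⟨hu1, hu2⟩ := hmemW'' u hu
      rw [hκj, hκo u hu1 hu2]
      by_cases hc : j + 1 < u ∧ u ≤ f j
      · rw [if_pos ⟨by omega, hc.2⟩, if_pos hc]
      · rw [if_neg, if_neg hc]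
        rintro ⟨ha, hb⟩; exact hc ⟨by omega, hb⟩
  -- column at j over W: e(v, j) = 0 unless v ∈ W'' with v < j
  have hcolj : ∑ v ∈ W, (if v < j ∧ j ≤ f v then cnt (κ v) (κ j) else 0)
      = ∑ v ∈ W'', (if v < j ∧ j ≤ f v then cnt (μ v) (μ (j+1) \ {t}) else 0) := by
    rw [hWins, Finset.sum_insert hj1W'']
    rw [if_neg (by omega)]
    rw [zero_add]
    refine Finset.sum_congr rfl fun v hv => ?_
    obtain ⟨hv1, hv2⟩ := hmemW'' v hv
    rw [hκj, hκo v hv1 hv2]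
  -- match: column j + column j+1 (κ) = column j+1 (μ, f')
  have hcol : (∑ v ∈ W'', (if v < j ∧ j ≤ f v then cnt (μ v) (μ (j+1) \ {t}) else 0))
      + (∑ v ∈ W'', (if v < j+1 ∧ j+1 ≤ f v then cnt (κ v) (κ (j+1)) else 0))
      = ∑ v ∈ W'', (if v < j+1 ∧ j+1 ≤ f' v then cnt (μ v) (μ (j+1)) else 0) := by
    rw [← Finset.sum_add_distrib]
    refine Finset.sum_congr rfl fun v hv => ?_
    obtain ⟨hv1, hv2⟩ := hmemW'' v hv
    rw [hκj1, hκo v hv1 hv2, hf' v hv2]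
    by_cases hc : v < j ∧ j + 1 ≤ f v
    · rw [if_pos ⟨hc.1, by omega⟩, if_pos ⟨by omega, hc.2⟩, if_pos ⟨by omega, hc.2⟩]
      rw [← cnt_union_right _ _ _ (Finset.sdiff_disjoint)]
      rw [Finset.sdiff_union_of_subset (Finset.singleton_subset_iff.2 ht)]
    · by_cases hvj : v < j
      · have hfvj : f v ≠ j := hnoj v (Finset.mem_of_mem_erase hv) hvj
        rw [if_neg (by omega), if_neg (by omega), if_neg (by omega)]
      · rw [if_neg (by omega), if_neg (by omega), if_neg (by omega)]
  -- row at j+1 over W''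
  have hrow1 : ∑ u ∈ W'', (if j+1 < u ∧ u ≤ f (j+1) then cnt (κ (j+1)) (κ u) else 0)
      = cnt {t} (μ (f j + 1))
        + ∑ u ∈ W'', (if j + 1 < u ∧ u ≤ f j then cnt {t} (μ u) else 0) := by
    rw [← Finset.add_sum_erase W'' _ hcW'']
    congr 1
    · rw [hκj1, hκo _ (by omega) hcj1, if_pos ⟨by omega, by omega⟩]
    · rw [← Finset.add_sum_erase W''
        (fun u => if j + 1 < u ∧ u ≤ f j then cnt {t} (μ u) else 0) hcW'']
      have hz : (if j + 1 < f j + 1 ∧ f j + 1 ≤ f j then cnt {t} (μ (f j + 1)) else 0) = 0 :=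
        if_neg (by omega)
      rw [hz, zero_add]
      refine Finset.sum_congr rfl fun u hu => ?_
      have hne := Finset.ne_of_mem_erase hu
      obtain ⟨hu1, hu2⟩ := hmemW'' u (Finset.mem_of_mem_erase hu)
      rw [hκj1, hκo u hu1 hu2, hfj1]
      by_cases hc : j + 1 < u ∧ u ≤ f j
      · rw [if_pos ⟨hc.1, by omega⟩, if_pos hc]
      · rw [if_neg (by omega), if_neg hc]
  -- combine the two (j-row remainder) and (j+1 row) pieces into the f'-row at j+1
  have hrow2 : (∑ u ∈ W'', (if j + 1 < u ∧ u ≤ f j then cnt (μ (j+1) \ {t}) (μ u) else 0))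
      + (∑ u ∈ W'', (if j + 1 < u ∧ u ≤ f j then cnt {t} (μ u) else 0))
      = ∑ u ∈ W'', (if j+1 < u ∧ u ≤ f' (j+1) then cnt (μ (j+1)) (μ u) else 0) := by
    rw [← Finset.sum_add_distrib]
    refine Finset.sum_congr rfl fun u hu => ?_
    rw [hf'j1]
    by_cases hc : j + 1 < u ∧ u ≤ f j
    · rw [if_pos hc, if_pos hc, if_pos hc,
        ← cnt_union_left _ _ _ (Finset.sdiff_disjoint),
        Finset.sdiff_union_of_subset (Finset.singleton_subset_iff.2 ht)]
    · rw [if_neg hc, if_neg hc, if_neg hc]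
  -- the W'' × W'' block
  have hblock : ∑ v ∈ W'', ∑ u ∈ W'', (if v < u ∧ u ≤ f v then cnt (κ v) (κ u) else 0)
      = ∑ v ∈ W'', ∑ u ∈ W'', (if v < u ∧ u ≤ f' v then cnt (μ v) (μ u) else 0) := by
    refine Finset.sum_congr rfl fun v hv => Finset.sum_congr rfl fun u hu => ?_
    obtain ⟨hv1, hv2⟩ := hmemW'' v hv
    obtain ⟨hu1, hu2⟩ := hmemW'' u hu
    rw [hκo v hv1 hv2, hκo u hu1 hu2, hf' v hv2]
  rw [hdiag1, hrowj, hcolj]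
  -- expand the remaining double sum over W and the RHS ascN
  rw [hWins, sum2_insert W'' (j+1) hj1W'']
  rw [hdiag2, hrow1, hblock]
  have hGdiag : (if j+1 < j+1 ∧ j+1 ≤ f' (j+1) then cnt (μ (j+1)) (μ (j+1)) else 0) = 0 := by
    rw [if_neg]; omega
  omega

lemma ascN_congr {N : ℕ} (S : Finset ℕ) (f : ℕ → ℕ) (κ κ' : ℕ → Finset (Fin N))
    (h : ∀ v ∈ S, κ v = κ' v) : ascN S f κ = ascN S f κ' := by
  unfold ascN
  refine Finset.sum_congr rfl fun v hv => Finset.sum_congr rfl fun u hu => ?_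
  rw [h v hv, h u hu]

lemma monN_congr {N : ℕ} (S : Finset ℕ) (κ κ' : ℕ → Finset (Fin N))
    (h : ∀ v ∈ S, κ v = κ' v) : monN S κ = monN S κ' := by
  unfold monN
  exact Finset.prod_congr rfl fun v hv => by rw [h v hv]


lemma pair_sdiff_left {α : Type*} [DecidableEq α] {a b : α} (hab : a ≠ b) :
    ({a, b} : Finset α) \ {a} = {b} := by
  ext y
  simp only [Finset.mem_sdiff, Finset.mem_insert, Finset.mem_singleton]
  constructor
  · rintro ⟨h1 | h1, h2⟩
    · exact absurd h1 h2
    · exact h1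
  · rintro rfl
    exact ⟨Or.inr rfl, fun hc => hab hc.symm⟩

lemma pair_sdiff_right {α : Type*} [DecidableEq α] {a b : α} (hab : a ≠ b) :
    ({a, b} : Finset α) \ {b} = {a} := by
  ext y
  simp only [Finset.mem_sdiff, Finset.mem_insert, Finset.mem_singleton]
  constructor
  · rintro ⟨h1 | h1, h2⟩
    · exact h1
    · exact absurd h1 h2
  · rintro rfl
    exact ⟨Or.inl rfl, hab⟩

def mergeMap (n : ℕ) (I : Finset ℕ) (j : ℕ) {N : ℕ}
    (γ : {x // x ∈ verts n I} → Finset (Fin N)) :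
    {x // x ∈ verts n (I.erase j)} → Finset (Fin N) :=
  fun v => if v.val = j + 1 then toFun n I γ j ∪ toFun n I γ (j+1) else toFun n I γ v.val

lemma toFun_merge (n : ℕ) (I : Finset ℕ) (j : ℕ) {N : ℕ}
    (γ : {x // x ∈ verts n I} → Finset (Fin N)) {v : ℕ}
    (hv : v ∈ verts n (I.erase j)) :
    toFun n (I.erase j) (mergeMap n I j γ) v
      = if v = j + 1 then toFun n I γ j ∪ toFun n I γ (j+1) else toFun n I γ v := by
  rw [toFun_mem _ _ _ hv]; rfl

def splitMap (n : ℕ) (I : Finset ℕ) (j : ℕ) {N : ℕ}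
    (δ : {x // x ∈ verts n (I.erase j)} → Finset (Fin N)) (t : Fin N) :
    {x // x ∈ verts n I} → Finset (Fin N) :=
  fun v => if v.val = j then toFun n (I.erase j) δ (j+1) \ {t}
    else if v.val = j + 1 then {t} else toFun n (I.erase j) δ v.val

lemma toFun_split (n : ℕ) (I : Finset ℕ) (j : ℕ) {N : ℕ}
    (δ : {x // x ∈ verts n (I.erase j)} → Finset (Fin N)) (t : Fin N) {v : ℕ}
    (hv : v ∈ verts n I) :
    toFun n I (splitMap n I j δ t) v
      = if v = j then toFun n (I.erase j) δ (j+1) \ {t}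
        else if v = j + 1 then {t} else toFun n (I.erase j) δ v := by
  rw [toFun_mem _ _ _ hv]; rfl

end
end GHAux


set_option maxHeartbeats 1600000 in
/-- Theorem 42(2), eq. (52): blowup identity
`csf(h) = csf(g) + q csf(g')` where `g = h` and `g'` is `h` with `g' (j+1) = h j`,
both on `[r] \ {j}`. -/
theorem csf_blowup_case2 (n r : ℕ) (h : ℕ → ℕ) (hgen : IsGenHess n (Finset.Icc 1 r) h)
    (j : ℕ) (hj1 : 1 ≤ j) (hjr : j < r)
    (hval : h (j + 1) = h j + 1) (hgt : j < h j)
    (hempty : ∀ i ∈ Finset.Icc 1 r, h i ≠ j)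
    (N : ℕ) (hN : 1 ≤ N) :
    csf n (Finset.Icc 1 r) h N =
      csf n ((Finset.Icc 1 r).erase j) h N +
      Polynomial.X *
        csf n ((Finset.Icc 1 r).erase j) (Function.update h (j + 1) (h j)) N := by

  classical
  have hrn : r + 1 ≤ n := by
    have := hgen.1 r (Finset.mem_Icc.2 ⟨by omega, le_refl r⟩)
    omega
  have memV : ∀ x, x ∈ verts n (Finset.Icc 1 r) ↔ x = n ∨ (1 ≤ x ∧ x ≤ r) := by
    intro x; simp [verts, Finset.mem_Icc]
  have memV' : ∀ x, x ∈ verts n ((Finset.Icc 1 r).erase j) ↔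
      x = n ∨ (x ≠ j ∧ 1 ≤ x ∧ x ≤ r) := by
    intro x; simp [verts, Finset.mem_erase, Finset.mem_Icc]
  have hjV : j ∈ verts n (Finset.Icc 1 r) := (memV j).2 (Or.inr ⟨hj1, by omega⟩)
  have hj1V : j + 1 ∈ verts n (Finset.Icc 1 r) := (memV _).2 (Or.inr ⟨by omega, by omega⟩)
  have hhjV : h j ∈ verts n (Finset.Icc 1 r) := hgen.2.1 j hjV
  have hcV : h j + 1 ∈ verts n (Finset.Icc 1 r) := by
    rw [← hval]; exact hgen.2.1 (j+1) hj1V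
  have hjr' : h j ≤ r := by
    rcases (memV (h j)).1 hhjV with h1 | h1
    · rcases (memV (h j + 1)).1 hcV with h2 | h2 <;> omega
    · omega
  have hcV' : h j + 1 ∈ verts n ((Finset.Icc 1 r).erase j) := by
    rw [memV']; rcases (memV (h j + 1)).1 hcV with h1 | h1
    · exact Or.inl h1
    · exact Or.inr ⟨by omega, h1⟩
  have hj1V' : j + 1 ∈ verts n ((Finset.Icc 1 r).erase j) := by
    rw [memV']; exact Or.inr ⟨by omega, by omega, by omega⟩
  have hjnV' : j ∉ verts n ((Finset.Icc 1 r).erase j) := by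
    intro hc; rw [memV'] at hc; omega
  have hsubV : verts n ((Finset.Icc 1 r).erase j) ⊆ verts n (Finset.Icc 1 r) := by
    intro u hu; rw [memV'] at hu; rw [memV]; tauto
  -- weights
  have wtI1 : ∀ v, 1 ≤ v → v ≤ r → wt n (Finset.Icc 1 r) v = 1 := by
    intro v h1 h2
    unfold wt
    by_cases hv1 : v = 1
    · subst hv1
      rw [GHAux.sup_lt_eq_zero _ _ (fun u hu => by rw [memV] at hu; omega)]
    · rw [GHAux.sup_lt_eq _ v (v-1) ((memV _).2 (Or.inr ⟨by omega, by omega⟩)) (by omega)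
        (fun u hu hlt => by rw [memV] at hu; omega)]
      omega
  have wtn : wt n (Finset.Icc 1 r) n = n - r := by
    unfold wt
    rw [GHAux.sup_lt_eq _ n r ((memV r).2 (Or.inr ⟨by omega, le_refl r⟩)) (by omega)
      (fun u hu hlt => by rw [memV] at hu; omega)]
  have wtVj : wt n (Finset.Icc 1 r) j = 1 := wtI1 j (by omega) (by omega)
  have wtVj1 : wt n (Finset.Icc 1 r) (j+1) = 1 := wtI1 _ (by omega) (by omega)
  have wtVc : wt n (Finset.Icc 1 r) (h j + 1) = 1 := by
    rcases (memV (h j + 1)).1 hcV with h1 | h1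
    · rw [h1, wtn]; omega
    · exact wtI1 _ (by omega) (by omega)
  have wtV'eq : ∀ v ∈ verts n ((Finset.Icc 1 r).erase j), v ≠ j + 1 →
      wt n ((Finset.Icc 1 r).erase j) v = wt n (Finset.Icc 1 r) v := by
    intro v hv hne
    unfold wt
    rcases lt_or_ge v (j+1) with hlt | hge
    · have hvj : v < j := by rcases (memV' v).1 hv with h1 | h1 <;> omega
      have hfeq : ((verts n ((Finset.Icc 1 r).erase j)).filter (fun u => u < v))
          = ((verts n (Finset.Icc 1 r)).filter (fun u => u < v)) := by
        ext u
        rw [Finset.mem_filter, Finset.mem_filter, memV, memV']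
        omega
      rw [hfeq]
    · have hv2 : j + 2 ≤ v := by omega
      have hse : ((verts n ((Finset.Icc 1 r).erase j)).filter (fun u => u < v)).sup id
          = ((verts n (Finset.Icc 1 r)).filter (fun u => u < v)).sup id := by
        apply le_antisymm
        · exact Finset.sup_mono (Finset.filter_subset_filter _ hsubV)
        · apply Finset.sup_le
          intro u hu
          rw [Finset.mem_filter, memV] at hu
          by_cases huj : u = j
          · calc (id u : ℕ) ≤ j + 1 := by simp [huj]
              _ = id (j+1) := rfl
              _ ≤ _ := Finset.le_sup (Finset.mem_filter.2 ⟨hj1V', by omega⟩)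
          · exact Finset.le_sup (f := id) (Finset.mem_filter.2
              ⟨by rw [memV']; omega, hu.2⟩)
      rw [hse]
  have wtV'j1 : wt n ((Finset.Icc 1 r).erase j) (j+1) = 2 := by
    unfold wt
    by_cases hj1' : j = 1
    · rw [GHAux.sup_lt_eq_zero _ _ (fun u hu => by rw [memV'] at hu; omega)]
      omega
    · rw [GHAux.sup_lt_eq _ (j+1) (j-1)
        ((memV' _).2 (Or.inr ⟨by omega, by omega, by omega⟩))
        (by omega) (fun u hu hlt => by rw [memV'] at hu; omega)]
      omega
  have wtV'c : wt n ((Finset.Icc 1 r).erase j) (h j + 1) = 1 := by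
    rw [wtV'eq _ hcV' (by omega)]; exact wtVc
  have hVins : verts n (Finset.Icc 1 r) = insert j (verts n ((Finset.Icc 1 r).erase j)) := by
    ext u; rw [Finset.mem_insert, memV, memV']; omega
  -- merge of a proper coloring is proper for g'
  have T1 : ∀ γ : {x // x ∈ verts n (Finset.Icc 1 r)} → Finset (Fin N),
      IsProper n (Finset.Icc 1 r) h γ →
      IsProper n ((Finset.Icc 1 r).erase j) (Function.update h (j+1) (h j))
        (GHAux.mergeMap n (Finset.Icc 1 r) j γ) := by
    intro γ hγ
    rw [GHAux.isProper_iff] at hγ ⊢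
    obtain ⟨hc1, hd1⟩ := hγ
    constructor
    · intro v hv
      rw [GHAux.toFun_merge _ _ _ _ hv]
      by_cases hvj : v = j + 1
      · subst hvj
        rw [if_pos rfl,
          Finset.card_union_of_disjoint (hd1 j hjV (j+1) hj1V (by omega) (by omega)),
          hc1 j hjV, hc1 _ hj1V, wtVj, wtVj1, wtV'j1]
      · rw [if_neg hvj, hc1 v (hsubV hv), wtV'eq v hv hvj]
    · intro v hv u hu hvu hue
      rw [GHAux.toFun_merge _ _ _ _ hv, GHAux.toFun_merge _ _ _ _ hu]
      by_cases hvj : v = j + 1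
      · subst hvj
        rw [if_pos rfl, if_neg (by omega)]
        rw [Function.update_self] at hue
        have huV : u ∈ verts n (Finset.Icc 1 r) := hsubV hu
        exact Finset.disjoint_union_left.2
          ⟨hd1 j hjV u huV (by omega) (by omega), hd1 (j+1) hj1V u huV hvu (by omega)⟩
      · rw [if_neg hvj]
        rw [Function.update_of_ne hvj] at hue
        by_cases huj : u = j + 1
        · subst huj
          rw [if_pos rfl]
          have hvfacts : v = n ∨ (v ≠ j ∧ 1 ≤ v ∧ v ≤ r) := (memV' v).1 hv
          have hvj' : v < j := by omega
          have hvV : v ∈ verts n (Finset.Icc 1 r) := hsubV hv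
          have hfvj : h v ≠ j := hempty v (Finset.mem_Icc.2 ⟨by omega, by omega⟩)
          exact Finset.disjoint_union_right.2
            ⟨hd1 v hvV j hjV hvj' (by omega), hd1 v hvV (j+1) hj1V (by omega) hue⟩
        · rw [if_neg huj]
          exact hd1 v (hsubV hv) u (hsubV hu) hvu hue
  -- proper for h on V' iff proper for g' and the extra disjointness
  have T3 : ∀ δ : {x // x ∈ verts n ((Finset.Icc 1 r).erase j)} → Finset (Fin N),
      IsProper n ((Finset.Icc 1 r).erase j) h δ ↔
      (IsProper n ((Finset.Icc 1 r).erase j) (Function.update h (j+1) (h j)) δ ∧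
        Disjoint (GHAux.toFun n ((Finset.Icc 1 r).erase j) δ (j+1))
          (GHAux.toFun n ((Finset.Icc 1 r).erase j) δ (h j + 1))) := by
    intro δ
    rw [GHAux.isProper_iff, GHAux.isProper_iff]
    constructor
    · rintro ⟨hc1, hd1⟩
      refine ⟨⟨hc1, fun v hv u hu hvu hue => ?_⟩,
        hd1 _ hj1V' _ hcV' (by omega) (by omega)⟩
      by_cases hvj : v = j+1
      · subst hvj
        rw [Function.update_self] at hue
        exact hd1 _ hv u hu hvu (by omega)
      · rw [Function.update_of_ne hvj] at hue
        exact hd1 _ hv u hu hvu hue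
    · rintro ⟨⟨hc1, hd1⟩, hdisj⟩
      refine ⟨hc1, fun v hv u hu hvu hue => ?_⟩
      by_cases hvj : v = j+1
      · subst hvj
        rw [hval] at hue
        by_cases huc : u = h j + 1
        · subst huc; exact hdisj
        · exact hd1 _ hv u hu hvu (by rw [Function.update_self]; omega)
      · exact hd1 v hv u hu hvu (by rw [Function.update_of_ne hvj]; omega)
  -- the per-fiber identity
  have key : ∀ δ ∈ Finset.univ.filter
      (fun δ : {x // x ∈ verts n ((Finset.Icc 1 r).erase j)} → Finset (Fin N) =>
        IsProper n ((Finset.Icc 1 r).erase j) (Function.update h (j+1) (h j)) δ),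
      (∑ γ ∈ (Finset.univ.filter
          (fun γ : {x // x ∈ verts n (Finset.Icc 1 r)} → Finset (Fin N) =>
            IsProper n (Finset.Icc 1 r) h γ)).filter
          (fun γ => GHAux.mergeMap n (Finset.Icc 1 r) j γ = δ),
        Polynomial.C (GHAux.monN (verts n (Finset.Icc 1 r)) (GHAux.toFun n (Finset.Icc 1 r) γ)) *
          Polynomial.X ^ GHAux.ascN (verts n (Finset.Icc 1 r)) h (GHAux.toFun n (Finset.Icc 1 r) γ))
      = Polynomial.C (GHAux.monN (verts n ((Finset.Icc 1 r).erase j))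
            (GHAux.toFun n ((Finset.Icc 1 r).erase j) δ)) *
          Polynomial.X ^ (GHAux.ascN (verts n ((Finset.Icc 1 r).erase j))
            (Function.update h (j+1) (h j)) (GHAux.toFun n ((Finset.Icc 1 r).erase j) δ) + 1)
        + (if Disjoint (GHAux.toFun n ((Finset.Icc 1 r).erase j) δ (j+1))
              (GHAux.toFun n ((Finset.Icc 1 r).erase j) δ (h j + 1)) then
            Polynomial.C (GHAux.monN (verts n ((Finset.Icc 1 r).erase j))
              (GHAux.toFun n ((Finset.Icc 1 r).erase j) δ)) *
              Polynomial.X ^ (GHAux.ascN (verts n ((Finset.Icc 1 r).erase j)) h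
                (GHAux.toFun n ((Finset.Icc 1 r).erase j) δ)) else 0) := by
    intro δ hδ
    rw [Finset.mem_filter] at hδ
    have hδp := hδ.2
    obtain ⟨hc1, hd1⟩ := (GHAux.isProper_iff _ _ _ δ).1 hδp
    have hcard2 : (GHAux.toFun n ((Finset.Icc 1 r).erase j) δ (j+1)).card = 2 := by
      rw [hc1 (j+1) hj1V', wtV'j1]
    have hcardc : (GHAux.toFun n ((Finset.Icc 1 r).erase j) δ (h j + 1)).card = 1 := by
      rw [hc1 _ hcV', wtV'c]
    obtain ⟨a, b, hab, hpair⟩ := Finset.card_eq_two.1 hcard2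
    obtain ⟨x, hx⟩ := Finset.card_eq_one.1 hcardc
    have hsplitval : ∀ (t : Fin N), ∀ v ∈ verts n (Finset.Icc 1 r),
        GHAux.toFun n (Finset.Icc 1 r) (GHAux.splitMap n (Finset.Icc 1 r) j δ t) v
        = if v = j then GHAux.toFun n ((Finset.Icc 1 r).erase j) δ (j+1) \ {t} else if v = j+1 then {t} else GHAux.toFun n ((Finset.Icc 1 r).erase j) δ v :=
      fun t v hv => GHAux.toFun_split n (Finset.Icc 1 r) j δ t hv
    have hinj : ∀ t1 ∈ GHAux.toFun n ((Finset.Icc 1 r).erase j) δ (j+1) \ GHAux.toFun n ((Finset.Icc 1 r).erase j) δ (h j + 1), ∀ t2 ∈ GHAux.toFun n ((Finset.Icc 1 r).erase j) δ (j+1) \ GHAux.toFun n ((Finset.Icc 1 r).erase j) δ (h j + 1),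
        GHAux.splitMap n (Finset.Icc 1 r) j δ t1 = GHAux.splitMap n (Finset.Icc 1 r) j δ t2 → t1 = t2 := by
      intro t1 _ t2 _ heq
      have e1 : GHAux.splitMap n (Finset.Icc 1 r) j δ t1 ⟨j+1, hj1V⟩ = {t1} := by
        show (if ((⟨j+1, hj1V⟩ : {x // x ∈ verts n (Finset.Icc 1 r)}) : ℕ) = j then GHAux.toFun n ((Finset.Icc 1 r).erase j) δ (j+1) \ {t1}
          else if ((⟨j+1, hj1V⟩ : {x // x ∈ verts n (Finset.Icc 1 r)}) : ℕ) = j+1 then {t1} else GHAux.toFun n ((Finset.Icc 1 r).erase j) δ (j+1)) = {t1}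
        rw [if_neg (Nat.succ_ne_self j), if_pos rfl]
      have e2 : GHAux.splitMap n (Finset.Icc 1 r) j δ t2 ⟨j+1, hj1V⟩ = {t2} := by
        show (if ((⟨j+1, hj1V⟩ : {x // x ∈ verts n (Finset.Icc 1 r)}) : ℕ) = j then GHAux.toFun n ((Finset.Icc 1 r).erase j) δ (j+1) \ {t2}
          else if ((⟨j+1, hj1V⟩ : {x // x ∈ verts n (Finset.Icc 1 r)}) : ℕ) = j+1 then {t2} else GHAux.toFun n ((Finset.Icc 1 r).erase j) δ (j+1)) = {t2}
        rw [if_neg (Nat.succ_ne_self j), if_pos rfl]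
      have e3 : ({t1} : Finset (Fin N)) = {t2} := by
        rw [← e1, heq, e2]
      exact Finset.singleton_injective e3
    have hfiber : (Finset.univ.filter
          (fun γ : {x // x ∈ verts n (Finset.Icc 1 r)} → Finset (Fin N) =>
            IsProper n (Finset.Icc 1 r) h γ)).filter
          (fun γ => GHAux.mergeMap n (Finset.Icc 1 r) j γ = δ)
        = (GHAux.toFun n ((Finset.Icc 1 r).erase j) δ (j+1) \ GHAux.toFun n ((Finset.Icc 1 r).erase j) δ (h j + 1)).image (GHAux.splitMap n (Finset.Icc 1 r) j δ) := by
      ext γ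
      simp only [Finset.mem_filter, Finset.mem_univ, true_and, Finset.mem_image,
        Finset.mem_sdiff]
      constructor
      · rintro ⟨hγp, hγm⟩
        obtain ⟨hgc, hgd⟩ := (GHAux.isProper_iff _ _ _ γ).1 hγp
        obtain ⟨s, hs⟩ := Finset.card_eq_one.1
          (show (GHAux.toFun n (Finset.Icc 1 r) γ j).card = 1 by rw [hgc j hjV, wtVj])
        obtain ⟨t, ht⟩ := Finset.card_eq_one.1
          (show (GHAux.toFun n (Finset.Icc 1 r) γ (j+1)).card = 1 by rw [hgc _ hj1V, wtVj1])
        have hst : s ≠ t := by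
          have hd := hgd j hjV (j+1) hj1V (by omega) (by omega)
          rw [hs, ht, Finset.disjoint_singleton] at hd
          exact hd
        have hmj1 : GHAux.toFun n ((Finset.Icc 1 r).erase j) δ (j+1) = GHAux.toFun n (Finset.Icc 1 r) γ j ∪ GHAux.toFun n (Finset.Icc 1 r) γ (j+1) := by
          rw [← hγm, GHAux.toFun_merge n (Finset.Icc 1 r) j γ hj1V', if_pos rfl]
        have hmo : ∀ v ∈ verts n ((Finset.Icc 1 r).erase j), v ≠ j+1 → GHAux.toFun n ((Finset.Icc 1 r).erase j) δ v = GHAux.toFun n (Finset.Icc 1 r) γ v := by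
          intro v hv hne
          rw [← hγm, GHAux.toFun_merge n (Finset.Icc 1 r) j γ hv, if_neg hne]
        refine ⟨t, ⟨?_, ?_⟩, ?_⟩
        · rw [hmj1, ht]
          exact Finset.mem_union_right _ (Finset.mem_singleton_self t)
        · rw [hmo _ hcV' (by omega)]
          have hd := hgd (j+1) hj1V (h j + 1) hcV (by omega) (by omega)
          rw [ht, Finset.disjoint_singleton_left] at hd
          exact hd
        · funext v
          rw [GHAux.toFun_val n (Finset.Icc 1 r) γ v,
            GHAux.toFun_val n (Finset.Icc 1 r) (GHAux.splitMap n (Finset.Icc 1 r) j δ t) v,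
            hsplitval t v.val v.2]
          by_cases hvj : (v : ℕ) = j
          · rw [if_pos hvj, hvj, hmj1, hs, ht, Finset.union_sdiff_right,
              Finset.sdiff_singleton_eq_erase,
              Finset.erase_eq_of_notMem (by simp [Ne.symm hst])]
          · by_cases hvj1 : (v : ℕ) = j + 1
            · rw [if_neg hvj, if_pos hvj1, hvj1, ht]
            · have hvm := (memV (v : ℕ)).1 v.2
              rw [if_neg hvj, if_neg hvj1,
                hmo v.val (by rw [memV']; omega) hvj1]
      · rintro ⟨t, ⟨htm, htc⟩, rfl⟩
        constructor
        · rw [GHAux.isProper_iff]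
          constructor
          · intro v hv
            rw [hsplitval t v hv]
            by_cases hvj : v = j
            · rw [if_pos hvj, hvj, wtVj,
                Finset.card_sdiff_of_subset (Finset.singleton_subset_iff.2 htm), hcard2]
              simp
            · by_cases hvj1 : v = j+1
              · rw [if_neg hvj, if_pos hvj1, hvj1, wtVj1, Finset.card_singleton]
              · rw [if_neg hvj, if_neg hvj1]
                have hvm := (memV v).1 hv
                have hvV' : v ∈ verts n ((Finset.Icc 1 r).erase j) := by rw [memV']; omega
                rw [hc1 v hvV', wtV'eq v hvV' hvj1]
          · intro v hv u hu hvu hue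
            rw [hsplitval t v hv, hsplitval t u hu]
            by_cases hvj : v = j
            · rw [if_pos hvj]
              rw [hvj] at hue
              by_cases huj1 : u = j + 1
              · rw [if_neg (by omega), if_pos huj1]
                exact Finset.sdiff_disjoint
              · rw [if_neg (by omega), if_neg huj1]
                have hum := (memV u).1 hu
                have huV' : u ∈ verts n ((Finset.Icc 1 r).erase j) := by rw [memV']; omega
                exact Finset.disjoint_of_subset_left Finset.sdiff_subset
                  (hd1 (j+1) hj1V' u huV' (by omega)
                    (by rw [Function.update_self]; omega))
            · by_cases hvj1 : v = j + 1
              · rw [hvj1, hval] at hue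
                rw [if_neg hvj, if_pos hvj1]
                by_cases huc : u = h j + 1
                · rw [if_neg (by omega), if_neg (by omega), huc]
                  exact Finset.disjoint_singleton_left.2 htc
                · rw [if_neg (by omega), if_neg (by omega)]
                  have hum := (memV u).1 hu
                  have huV' : u ∈ verts n ((Finset.Icc 1 r).erase j) := by rw [memV']; omega
                  exact Finset.disjoint_of_subset_left (Finset.singleton_subset_iff.2 htm)
                    (hd1 (j+1) hj1V' u huV' (by omega) (by rw [Function.update_self]; omega))
              · rw [if_neg hvj, if_neg hvj1]
                have hvm := (memV v).1 hv
                have hvV' : v ∈ verts n ((Finset.Icc 1 r).erase j) := by rw [memV']; omega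
                by_cases huj : u = j
                · rw [if_pos huj]
                  have hfvj : h v ≠ j := hempty v (Finset.mem_Icc.2 ⟨by omega, by omega⟩)
                  exact Finset.disjoint_of_subset_right Finset.sdiff_subset
                    (hd1 v hvV' (j+1) hj1V' (by omega)
                      (by rw [Function.update_of_ne hvj1]; omega))
                · by_cases huj1 : u = j + 1
                  · rw [if_neg huj, if_pos huj1]
                    have hfvj : h v ≠ j := hempty v (Finset.mem_Icc.2 ⟨by omega, by omega⟩)
                    exact Finset.disjoint_of_subset_right (Finset.singleton_subset_iff.2 htm)
                      (hd1 v hvV' (j+1) hj1V' (by omega)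
                        (by rw [Function.update_of_ne hvj1]; omega))
                  · rw [if_neg huj, if_neg huj1]
                    have hum := (memV u).1 hu
                    have huV' : u ∈ verts n ((Finset.Icc 1 r).erase j) := by rw [memV']; omega
                    exact hd1 v hvV' u huV' hvu
                      (by rw [Function.update_of_ne hvj1]; omega)
        · funext w
          rw [GHAux.toFun_val n ((Finset.Icc 1 r).erase j) δ w]
          show (if (w : ℕ) = j + 1 then GHAux.toFun n (Finset.Icc 1 r) (GHAux.splitMap n (Finset.Icc 1 r) j δ t) j ∪ GHAux.toFun n (Finset.Icc 1 r) (GHAux.splitMap n (Finset.Icc 1 r) j δ t) (j+1)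
            else GHAux.toFun n (Finset.Icc 1 r) (GHAux.splitMap n (Finset.Icc 1 r) j δ t) (w : ℕ)) = GHAux.toFun n ((Finset.Icc 1 r).erase j) δ (w : ℕ)
          by_cases hwj1 : (w : ℕ) = j + 1
          · rw [if_pos hwj1, hsplitval t j hjV, hsplitval t (j+1) hj1V,
              if_pos (rfl : j = j), if_neg (Nat.succ_ne_self j), if_pos (rfl : j+1 = j+1),
              Finset.sdiff_union_of_subset (Finset.singleton_subset_iff.2 htm), hwj1]
          · have hwm := (memV' (w : ℕ)).1 w.2
            have hwj : (w : ℕ) ≠ j := by omega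
            rw [if_neg hwj1, hsplitval t (w : ℕ) (hsubV w.2), if_neg hwj, if_neg hwj1]
    rw [hfiber, Finset.sum_image hinj]
    have hterm : ∀ t ∈ GHAux.toFun n ((Finset.Icc 1 r).erase j) δ (j+1) \ GHAux.toFun n ((Finset.Icc 1 r).erase j) δ (h j + 1),
        Polynomial.C (GHAux.monN (verts n (Finset.Icc 1 r)) (GHAux.toFun n (Finset.Icc 1 r) (GHAux.splitMap n (Finset.Icc 1 r) j δ t))) *
          Polynomial.X ^ GHAux.ascN (verts n (Finset.Icc 1 r)) h (GHAux.toFun n (Finset.Icc 1 r) (GHAux.splitMap n (Finset.Icc 1 r) j δ t))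
        = Polynomial.C (GHAux.monN (verts n ((Finset.Icc 1 r).erase j)) (GHAux.toFun n ((Finset.Icc 1 r).erase j) δ)) *
          Polynomial.X ^ (GHAux.ascN (verts n ((Finset.Icc 1 r).erase j)) (Function.update h (j+1) (h j)) (GHAux.toFun n ((Finset.Icc 1 r).erase j) δ)
            + GHAux.cnt (GHAux.toFun n ((Finset.Icc 1 r).erase j) δ (j+1) \ {t}) {t} + GHAux.cnt {t} (GHAux.toFun n ((Finset.Icc 1 r).erase j) δ (h j + 1))) := by
      intro t htmem
      rw [Finset.mem_sdiff] at htmem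
      have hmon : GHAux.monN (verts n (Finset.Icc 1 r)) (GHAux.toFun n (Finset.Icc 1 r) (GHAux.splitMap n (Finset.Icc 1 r) j δ t)) = GHAux.monN (verts n ((Finset.Icc 1 r).erase j)) (GHAux.toFun n ((Finset.Icc 1 r).erase j) δ) := by
        rw [GHAux.monN_congr _ _ _ (hsplitval t), hVins]
        exact GHAux.mon_split _ _ _ _ hjnV' hj1V' htmem.1
      have hasc : GHAux.ascN (verts n (Finset.Icc 1 r)) h (GHAux.toFun n (Finset.Icc 1 r) (GHAux.splitMap n (Finset.Icc 1 r) j δ t))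
          = GHAux.ascN (verts n ((Finset.Icc 1 r).erase j)) (Function.update h (j+1) (h j)) (GHAux.toFun n ((Finset.Icc 1 r).erase j) δ)
            + GHAux.cnt (GHAux.toFun n ((Finset.Icc 1 r).erase j) δ (j+1) \ {t}) {t} + GHAux.cnt {t} (GHAux.toFun n ((Finset.Icc 1 r).erase j) δ (h j + 1)) := by
        rw [GHAux.ascN_congr _ _ _ _ (hsplitval t), hVins]
        exact GHAux.asc_decomp _ _ _ _ _ _ hjnV' hj1V' hcV' (by omega) hval
          (fun v hv => Function.update_of_ne hv _ _) (Function.update_self _ _ _)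
          (fun v hv hvj => hempty v (Finset.mem_Icc.2
            ⟨by have := (memV' v).1 hv; omega, by have := (memV' v).1 hv; omega⟩))
          htmem.1
      rw [hmon, hasc]
    rw [Finset.sum_congr rfl hterm]
    have hfull : GHAux.ascN (verts n ((Finset.Icc 1 r).erase j)) h (GHAux.toFun n ((Finset.Icc 1 r).erase j) δ)
        = GHAux.ascN (verts n ((Finset.Icc 1 r).erase j)) (Function.update h (j+1) (h j)) (GHAux.toFun n ((Finset.Icc 1 r).erase j) δ) + GHAux.cnt (GHAux.toFun n ((Finset.Icc 1 r).erase j) δ (j+1)) (GHAux.toFun n ((Finset.Icc 1 r).erase j) δ (h j + 1)) :=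
      GHAux.asc_fullrow (verts n ((Finset.Icc 1 r).erase j)) j h (Function.update h (j+1) (h j)) (GHAux.toFun n ((Finset.Icc 1 r).erase j) δ) hj1V' hcV' (by omega) hval
        (fun v hv => Function.update_of_ne hv _ _) (Function.update_self _ _ _)
    rw [hfull, hpair, hx]
    by_cases hxa : x = a
    · subst hxa
      rw [GHAux.pair_sdiff_left hab, Finset.sum_singleton,
        GHAux.pair_sdiff_right hab, GHAux.cnt_singleton, GHAux.cnt_singleton,
        if_neg (fun hd => (Finset.disjoint_left.1 hd (Finset.mem_insert_self x {b})
          (Finset.mem_singleton_self x))), add_zero]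
      rcases lt_trichotomy x b with h1 | h1 | h1
      · rw [if_pos h1, if_neg (lt_asymm h1)]; try ring
      · exact absurd h1 hab
      · rw [if_neg (lt_asymm h1), if_pos h1]; try ring
    · by_cases hxb : x = b
      · subst hxb
        rw [GHAux.pair_sdiff_right hab, Finset.sum_singleton,
          GHAux.pair_sdiff_left hab, GHAux.cnt_singleton, GHAux.cnt_singleton,
          if_neg (fun hd => (Finset.disjoint_left.1 hd
            (Finset.mem_insert_of_mem (Finset.mem_singleton_self x))
            (Finset.mem_singleton_self x))), add_zero]
        rcases lt_trichotomy a x with h1 | h1 | h1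
        · rw [if_pos h1, if_neg (lt_asymm h1)]; try ring
        · exact absurd h1 hab
        · rw [if_neg (lt_asymm h1), if_pos h1]; try ring
      · have hdisj2 : Disjoint ({a, b} : Finset (Fin N)) {x} :=
          Finset.disjoint_singleton_right.2 (by simp [hxa, hxb])
        have hsd : ({a, b} : Finset (Fin N)) \ {x} = {a, b} := by
          ext y
          simp only [Finset.mem_sdiff, Finset.mem_singleton, Finset.mem_insert]
          constructor
          · rintro ⟨h1, _⟩; exact h1
          · rintro (rfl | rfl)
            · exact ⟨Or.inl rfl, fun hc => hxa hc.symm⟩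
            · exact ⟨Or.inr rfl, fun hc => hxb hc.symm⟩
        have hcntab : GHAux.cnt ({a, b} : Finset (Fin N)) {x}
            = (if a < x then 1 else 0) + (if b < x then 1 else 0) := by
          rw [Finset.insert_eq,
            GHAux.cnt_union_left _ _ _ (Finset.disjoint_singleton.2 hab),
            GHAux.cnt_singleton, GHAux.cnt_singleton]
        rw [hsd, Finset.sum_pair hab, if_pos hdisj2,
          GHAux.pair_sdiff_left hab, GHAux.pair_sdiff_right hab,
          GHAux.cnt_singleton, GHAux.cnt_singleton, GHAux.cnt_singleton,
          GHAux.cnt_singleton, hcntab]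
        rcases lt_trichotomy a b with h1 | h1 | h1
        · rcases lt_trichotomy x a with h2 | h2 | h2
          · rw [if_neg (lt_asymm h1), if_pos h1, if_neg (lt_asymm h2),
              if_neg (lt_asymm (lt_trans h2 h1))]; try ring
          · exact absurd h2 (fun hc => hxa hc)
          · rcases lt_trichotomy x b with h3 | h3 | h3
            · rw [if_neg (lt_asymm h1), if_pos h1, if_pos h2, if_neg (lt_asymm h3)]; try ring
            · exact absurd h3 hxb
            · rw [if_neg (lt_asymm h1), if_pos h1, if_pos h2, if_pos h3]; try ring
        · exact absurd h1 hab
        · rcases lt_trichotomy x b with h2 | h2 | h2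
          · rw [if_pos h1, if_neg (lt_asymm h1), if_neg (lt_asymm (lt_trans h2 h1)),
              if_neg (lt_asymm h2)]; try ring
          · exact absurd h2 hxb
          · rcases lt_trichotomy x a with h3 | h3 | h3
            · rw [if_pos h1, if_neg (lt_asymm h1), if_neg (lt_asymm h3), if_pos h2]; try ring
            · exact absurd h3 hxa
            · rw [if_pos h1, if_neg (lt_asymm h1), if_pos h3, if_pos h2]; try ring

  -- assembly
  rw [GHAux.csf_eq n (Finset.Icc 1 r) h N, GHAux.csf_eq n ((Finset.Icc 1 r).erase j) h N,
    GHAux.csf_eq n ((Finset.Icc 1 r).erase j) (Function.update h (j+1) (h j)) N]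
  have hmaps : ∀ γ ∈ Finset.univ.filter
      (fun γ : {x // x ∈ verts n (Finset.Icc 1 r)} → Finset (Fin N) =>
        IsProper n (Finset.Icc 1 r) h γ),
      GHAux.mergeMap n (Finset.Icc 1 r) j γ ∈ Finset.univ.filter
        (fun δ : {x // x ∈ verts n ((Finset.Icc 1 r).erase j)} → Finset (Fin N) =>
          IsProper n ((Finset.Icc 1 r).erase j) (Function.update h (j+1) (h j)) δ) := by
    intro γ hγ
    rw [Finset.mem_filter] at hγ ⊢
    exact ⟨Finset.mem_univ _, T1 γ hγ.2⟩
  rw [← Finset.sum_fiberwise_of_maps_to hmaps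
    (fun γ => Polynomial.C (GHAux.monN (verts n (Finset.Icc 1 r)) (GHAux.toFun n (Finset.Icc 1 r) γ)) *
      Polynomial.X ^ GHAux.ascN (verts n (Finset.Icc 1 r)) h (GHAux.toFun n (Finset.Icc 1 r) γ))]
  rw [Finset.sum_congr rfl key, Finset.sum_add_distrib]
  have hXsum : ∑ δ ∈ Finset.univ.filter
      (fun δ : {x // x ∈ verts n ((Finset.Icc 1 r).erase j)} → Finset (Fin N) =>
        IsProper n ((Finset.Icc 1 r).erase j) (Function.update h (j+1) (h j)) δ),
      Polynomial.C (GHAux.monN (verts n ((Finset.Icc 1 r).erase j))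
          (GHAux.toFun n ((Finset.Icc 1 r).erase j) δ)) *
        Polynomial.X ^ (GHAux.ascN (verts n ((Finset.Icc 1 r).erase j))
          (Function.update h (j+1) (h j)) (GHAux.toFun n ((Finset.Icc 1 r).erase j) δ) + 1)
      = Polynomial.X * ∑ δ ∈ Finset.univ.filter
      (fun δ : {x // x ∈ verts n ((Finset.Icc 1 r).erase j)} → Finset (Fin N) =>
        IsProper n ((Finset.Icc 1 r).erase j) (Function.update h (j+1) (h j)) δ),
      Polynomial.C (GHAux.monN (verts n ((Finset.Icc 1 r).erase j))
          (GHAux.toFun n ((Finset.Icc 1 r).erase j) δ)) *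
        Polynomial.X ^ (GHAux.ascN (verts n ((Finset.Icc 1 r).erase j))
          (Function.update h (j+1) (h j)) (GHAux.toFun n ((Finset.Icc 1 r).erase j) δ)) := by
    rw [Finset.mul_sum]
    exact Finset.sum_congr rfl fun δ _ => by ring
  have hitesum : ∑ δ ∈ Finset.univ.filter
      (fun δ : {x // x ∈ verts n ((Finset.Icc 1 r).erase j)} → Finset (Fin N) =>
        IsProper n ((Finset.Icc 1 r).erase j) (Function.update h (j+1) (h j)) δ),
      (if Disjoint (GHAux.toFun n ((Finset.Icc 1 r).erase j) δ (j+1))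
            (GHAux.toFun n ((Finset.Icc 1 r).erase j) δ (h j + 1)) then
          Polynomial.C (GHAux.monN (verts n ((Finset.Icc 1 r).erase j))
            (GHAux.toFun n ((Finset.Icc 1 r).erase j) δ)) *
            Polynomial.X ^ (GHAux.ascN (verts n ((Finset.Icc 1 r).erase j)) h
              (GHAux.toFun n ((Finset.Icc 1 r).erase j) δ)) else 0)
      = ∑ δ ∈ Finset.univ.filter
      (fun δ : {x // x ∈ verts n ((Finset.Icc 1 r).erase j)} → Finset (Fin N) =>
        IsProper n ((Finset.Icc 1 r).erase j) h δ),
      Polynomial.C (GHAux.monN (verts n ((Finset.Icc 1 r).erase j))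
          (GHAux.toFun n ((Finset.Icc 1 r).erase j) δ)) *
        Polynomial.X ^ (GHAux.ascN (verts n ((Finset.Icc 1 r).erase j)) h
          (GHAux.toFun n ((Finset.Icc 1 r).erase j) δ)) := by
    rw [← Finset.sum_filter, Finset.filter_filter]
    apply Finset.sum_congr _ (fun δ _ => rfl)
    apply Finset.filter_congr
    intro δ _
    exact (T3 δ).symm
  rw [hXsum, hitesum]
  ring
end
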